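/- arXiv:1906.07216 — 7 statements merged into one kernel-verified Lean document; each statement's English description precedes it below -/
import Mathlib

section
/- Let p be a prime and let X be a finite group of characteristic p, i.e. C_X(O_p(X)) ≤ O_p(X). Let U be a normal p-subgroup of X and let R be a normal subgroup of X with [U,R] ≤ [U,O_p(X)] (that is, R centralizes U/[U,O_p(X)]). If [O_p(X), O^p(R)] ≤ U, then R ≤ O_p(X). -/
/-!
Put `Vⱼ = [U, P, …, P]` (`j` copies of `P = O_p(X)`), a descending chain of normal `p`-subgroups
ending at `1` because `P` is nilpotent. By induction on `j`, `[P, T] ≤ Vⱼ` and `[Vⱼ, T] ≤ Vⱼ₊₁`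
for `T = O^p(R)`. For the first claim it suffices, by minimality of `T`, that every `p'`-element
`t ∈ T` centralizes `P` modulo `Vⱼ₊₁`: for `q ∈ P` the commutator `c = [q, t]` is a `p`-element
of `Vⱼ` commuting with `t` modulo `Vⱼ₊₁`, and `c t` is conjugate to `t`, so `c` also has
`p'`-order there. The second claim follows from the three subgroups lemma. Hence `[P, T] = 1`,
so `T ≤ C_X(P) ≤ P`, `R` is a `p`-group and `R ≤ O_p(X)`.
-/

open scoped commutatorElement
open Subgroup

section

variable {G : Type*} [Group G]

theorem exists_coprime_orderOf_pow_prime_pow {p : ℕ} (hp : p.Prime) {s : G}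
    (hs : IsOfFinOrder s) : ∃ a : ℕ, p.Coprime (orderOf (s ^ p ^ a)) := by
  refine ⟨(orderOf s).factorization p, ?_⟩
  rw [orderOf_pow' s (pow_ne_zero _ hp.ne_zero), Nat.gcd_eq_right (Nat.ordProj_dvd _ _)]
  exact Nat.coprime_ordCompl hp hs.orderOf_pos.ne'

theorem commutatorElement_eq_one_of_coprime {q t : G} {m b : ℕ} (hmb : m.Coprime b)
    (hct : Commute ⁅q, t⁆ t) (ht : t ^ b = 1) (hc : ⁅q, t⁆ ^ m = 1) : ⁅q, t⁆ = 1 := by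
  have hcb : ⁅q, t⁆ ^ b = 1 :=
    calc ⁅q, t⁆ ^ b = (⁅q, t⁆ * t) ^ b := by rw [hct.mul_pow, ht, mul_one]
      _ = q * t ^ b * q⁻¹ := by rw [commutatorElement_def, inv_mul_cancel_right, conj_pow]
      _ = 1 := by rw [ht, mul_one, mul_inv_cancel]
  simpa [hmb] using pow_gcd_eq_one.mpr ⟨hc, hcb⟩

theorem commutatorElement_mem_of_coprime {W : Subgroup G} [W.Normal] {q t : G} {m b : ℕ}
    (hmb : m.Coprime b) (hct : ⁅⁅q, t⁆, t⁆ ∈ W) (ht : t ^ b = 1) (hc : ⁅q, t⁆ ^ m = 1) :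
    ⁅q, t⁆ ∈ W := by
  set π := QuotientGroup.mk' W
  have hπ : ∀ g, π g = 1 ↔ g ∈ W := fun g => QuotientGroup.eq_one_iff g
  rw [← hπ, map_commutatorElement]
  refine commutatorElement_eq_one_of_coprime hmb ?_ (by rw [← map_pow, ht, map_one])
    (by rw [← map_commutatorElement, ← map_pow, hc, map_one])
  rwa [← commutatorElement_eq_one_iff_commute, ← map_commutatorElement, ← map_commutatorElement, hπ]

namespace Subgroup

theorem commutator_commutator_le_of_rotate {A B C N : Subgroup G} [N.Normal]
    (h1 : ⁅⁅B, C⁆, A⁆ ≤ N) (h2 : ⁅⁅C, A⁆, B⁆ ≤ N) : ⁅⁅A, B⁆, C⁆ ≤ N := by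
  have hker : ∀ S : Subgroup G, S ≤ N ↔ S.map (QuotientGroup.mk' N) = ⊥ := fun S => by
    rw [eq_bot_iff, map_le_iff_le_comap, MonoidHom.comap_bot, QuotientGroup.ker_mk']
  simp only [hker, map_commutator] at h1 h2 ⊢
  exact commutator_commutator_eq_bot_of_rotate h1 h2

/-- The centralizer of `H` modulo `W`. -/
theorem mem_comap_centralizer_map_mk' {H W : Subgroup G} [W.Normal] {x : G} :
    x ∈ (centralizer (H.map (QuotientGroup.mk' W) : Set (G ⧸ W))).comap (QuotientGroup.mk' W) ↔
      ∀ h ∈ H, ⁅h, x⁆ ∈ W := by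
  simp only [mem_comap, mem_centralizer_iff, coe_map, Set.mem_image, SetLike.mem_coe,
    forall_exists_index, and_imp, forall_apply_eq_imp_iff₂, ← commutatorElement_eq_one_iff_mul_comm,
    ← map_commutatorElement, ← MonoidHom.mem_ker, QuotientGroup.ker_mk']

/-- `iterCommutator U P n = [U, P, …, P]`, with `n` copies of `P`. -/
def iterCommutator (U P : Subgroup G) : ℕ → Subgroup G
  | 0 => U
  | n + 1 => ⁅iterCommutator U P n, P⁆

variable (U P : Subgroup G)

@[simp]
theorem iterCommutator_zero : iterCommutator U P 0 = U := rfl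

@[simp]
theorem iterCommutator_succ (n : ℕ) :
    iterCommutator U P (n + 1) = ⁅iterCommutator U P n, P⁆ := rfl

instance iterCommutator_normal [U.Normal] [P.Normal] (n : ℕ) : (iterCommutator U P n).Normal := by
  induction n with
  | zero => assumption
  | succ n _ => rw [iterCommutator_succ]; infer_instance

theorem iterCommutator_le_self [U.Normal] [P.Normal] (n : ℕ) : iterCommutator U P n ≤ U := by
  induction n with
  | zero => exact le_rfl
  | succ n ih => exact commutator_le_left _ _ |>.trans ih

variable {U P}

theorem iterCommutator_le_lowerCentralSeries (hUP : U ≤ P) (n : ℕ) :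
    iterCommutator U P n ≤ P.lowerCentralSeries n := by
  induction n with
  | zero => exact hUP
  | succ n ih => exact commutator_mono ih le_rfl

theorem exists_iterCommutator_eq_bot [Group.IsNilpotent P] (hUP : U ≤ P) :
    ∃ n, iterCommutator U P n = ⊥ := by
  obtain ⟨n, hn⟩ := (isNilpotent_iff_lowerCentralSeries P).mp ‹_›
  exact ⟨n, le_bot_iff.mp (hn ▸ iterCommutator_le_lowerCentralSeries hUP n)⟩

end Subgroup

/-- `T = O^p(R)`: the smallest subgroup of `R` normalized by `R` with `R / T` a `p`-group. -/
structure IsPResidual (p : ℕ) (R T : Subgroup G) : Prop where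
  le : T ≤ R
  conj_mem : ∀ r ∈ R, ∀ t ∈ T, r * t * r⁻¹ ∈ T
  exists_pow_mem : ∀ r ∈ R, ∃ n : ℕ, r ^ p ^ n ∈ T
  le_of_pow_mem : ∀ N : Subgroup G, N ≤ R → (∀ r ∈ R, ∀ t ∈ N, r * t * r⁻¹ ∈ N) →
    (∀ r ∈ R, ∃ n : ℕ, r ^ p ^ n ∈ N) → T ≤ N

namespace IsPResidual

variable {p : ℕ} {R T : Subgroup G}

theorem isPGroup (hT : IsPResidual p R T) (hTp : IsPGroup p T) : IsPGroup p R := by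
  rintro ⟨r, hr⟩
  obtain ⟨n, hn⟩ := hT.exists_pow_mem r hr
  obtain ⟨m, hm⟩ := hTp ⟨_, hn⟩
  refine ⟨n + m, Subtype.ext ?_⟩
  simpa [pow_add, pow_mul] using congrArg Subtype.val hm

theorem le_of_coprime_orderOf_mem [Finite G] (hp : p.Prime) (hT : IsPResidual p R T)
    {N : Subgroup G} (hN : N.Normal) (h : ∀ t ∈ T, p.Coprime (orderOf t) → t ∈ N) : T ≤ N := by
  refine le_trans (hT.le_of_pow_mem (T ⊓ N) (inf_le_left.trans hT.le)
    (fun r hr t ht => ⟨hT.conj_mem r hr t ht.1, hN.conj_mem t ht.2 r⟩) fun r hr => ?_) inf_le_right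
  obtain ⟨n, hn⟩ := hT.exists_pow_mem r hr
  obtain ⟨a, ha⟩ := exists_coprime_orderOf_pow_prime_pow hp (isOfFinOrder_of_finite (r ^ p ^ n))
  have hmem : (r ^ p ^ n) ^ p ^ a ∈ T := pow_mem hn _
  exact ⟨n + a, by rw [pow_add, pow_mul]; exact ⟨hmem, h _ hmem ha⟩⟩

variable [Finite G] (hp : p.Prime) (hT : IsPResidual p R T) {P V W : Subgroup G}
include hp hT

theorem commutator_le_of_commutator_le [P.Normal] [W.Normal] (hV : IsPGroup p V)
    (hPT : ⁅P, T⁆ ≤ V) (hVT : ⁅V, T⁆ ≤ W) : ⁅P, T⁆ ≤ W := by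
  have hTC := hT.le_of_coprime_orderOf_mem hp (N := (centralizer (P.map (QuotientGroup.mk' W) :
    Set (G ⧸ W))).comap (QuotientGroup.mk' W)) inferInstance fun t ht hcop =>
      mem_comap_centralizer_map_mk'.mpr fun q hq => by
        have hc : ⁅q, t⁆ ∈ V := hPT (commutator_mem_commutator hq ht)
        obtain ⟨m, hm⟩ := hV ⟨_, hc⟩
        exact commutatorElement_mem_of_coprime (hcop.pow_left m)
          (hVT (commutator_mem_commutator hc ht)) (pow_orderOf_eq_one t)
          (by simpa using congrArg Subtype.val hm)
  exact commutator_le.mpr fun q hq t ht => mem_comap_centralizer_map_mk'.mp (hTC ht) q hq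

theorem commutator_le_iterCommutator {U : Subgroup G} [U.Normal] [P.Normal] (hUP : U ≤ P)
    (hUp : IsPGroup p U) (hRU : ⁅U, R⁆ ≤ ⁅U, P⁆) (hPT : ⁅P, T⁆ ≤ U) :
    ∀ j, ⁅P, T⁆ ≤ iterCommutator U P j ∧ ⁅iterCommutator U P j, T⁆ ≤ iterCommutator U P (j + 1)
  | 0 => ⟨hPT, (commutator_mono le_rfl hT.le).trans hRU⟩
  | j + 1 => by
    obtain ⟨ihP, ihV⟩ := commutator_le_iterCommutator hUP hUp hRU hPT j
    have hVU := iterCommutator_le_self U P j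
    have hPT' := hT.commutator_le_of_commutator_le hp (hUp.to_le hVU) ihP ihV
    refine ⟨hPT', commutator_commutator_le_of_rotate (A := iterCommutator U P j) ?_ ?_⟩
    · exact commutator_mono hPT' (hVU.trans hUP)
    · exact commutator_mono ((commutator_comm _ _).le.trans ihV) le_rfl

end IsPResidual

end

/-- Let `X` be a finite group of characteristic `p` (i.e. `C_X(O_p(X)) ≤ O_p(X)`,
where `P = O_p(X)` is the largest normal `p`-subgroup of `X`).  Let `U` be a normal
`p`-subgroup of `X` and `R` a normal subgroup of `X` with `[U,R] ≤ [U,O_p(X)]`.  If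
`[O_p(X), O^p(R)] ≤ U` (where `T = O^p(R)` is the smallest normal subgroup of `R` with
`p`-group quotient), then `R ≤ O_p(X)`. -/
theorem stmt1 {p : ℕ} (hp : p.Prime) {X : Type*} [Group X] [Finite X]
    (P : Subgroup X) (hPnorm : P.Normal) (hPp : IsPGroup p P)
    (hPmax : ∀ N : Subgroup X, N.Normal → IsPGroup p N → N ≤ P)
    (hchar : Subgroup.centralizer (P : Set X) ≤ P)
    (U : Subgroup X) (hUnorm : U.Normal) (hUp : IsPGroup p U)
    (R : Subgroup X) (hRnorm : R.Normal)
    (hRact : ⁅U, R⁆ ≤ ⁅U, P⁆)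
    (T : Subgroup X) (hTR : T ≤ R)
    (hTnorm : ∀ r ∈ R, ∀ t ∈ T, r * t * r⁻¹ ∈ T)
    (hTq : ∀ r ∈ R, ∃ n : ℕ, r ^ p ^ n ∈ T)
    (hTmin : ∀ N : Subgroup X, N ≤ R → (∀ r ∈ R, ∀ t ∈ N, r * t * r⁻¹ ∈ N) →
      (∀ r ∈ R, ∃ n : ℕ, r ^ p ^ n ∈ N) → T ≤ N)
    (hcomm : ⁅P, T⁆ ≤ U) :
    R ≤ P := by
  have : Fact p.Prime := ⟨hp⟩
  have hT : IsPResidual p R T := ⟨hTR, hTnorm, hTq, hTmin⟩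
  have hUP : U ≤ P := hPmax U hUnorm hUp
  have := hPp.isNilpotent
  obtain ⟨k, hk⟩ := exists_iterCommutator_eq_bot hUP
  have hPT : ⁅P, T⁆ = ⊥ :=
    le_bot_iff.mp (hk ▸ (hT.commutator_le_iterCommutator hp hUP hUp hRact hcomm k).1)
  have hTP : T ≤ P :=
    (commutator_eq_bot_iff_le_centralizer.mp (by rwa [commutator_comm])).trans hchar
  exact hPmax R hRnorm (hT.isPGroup (hPp.to_le hTP))
end

section
/- Let p be a prime, X a finite group, and V ≤ U normal p-subgroups of X. Let Q be a large p-subgroup of X (i.e. C_X(Q) ≤ Q and N_X(T) ≤ N_X(Q) for every nontrivial subgroup T of C_X(Q)) which is not normal in X. Assume that V is a nontrivial elementary abelian group on which X acts nontrivially by conjugation and which has no X-invariant subgroup other than 1 and V (i.e. V is a nontrivial irreducible GF(p)X-module), and that O^p(X) centralizes U/V, i.e. [U, O^p(X)] ≤ V. Then U is elementary abelian. -/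
/-!
A nontrivial normal `p`-subgroup `W` has a nontrivial element `w` centralized by a Sylow
`p`-subgroup `S ⊇ Q`. If moreover `O^p(X)` centralizes `W`, then `C_X(w)` contains
`O^p(X) S = X`, and largeness of `Q` applied to `⟨w⟩ ≤ C_X(Q)` gives `N_X(Q) = X`.
So when `Q` is not normal, every normal `p`-subgroup centralized by `O^p(X)` is trivial.

The irreducible module `V` is centralized by `U`, since `V ∩ C_X(U)` is a nontrivial normal
subgroup of `V`. Then `[[U, O^p(X)], U] ≤ [V, U] = 1`, and the three subgroups lemma makes
`O^p(X)` centralize `[U, U]`, so `U` is abelian. Finally `O^p(X)` acts on `U` through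
`u ↦ v u` with `v ∈ V`, which fixes `u ^ p`; hence it centralizes the normal subgroup
generated by the `p`-th powers of `U`, which is therefore trivial.
-/

/-- A `p`-subgroup `Q` of a group is *large* if `C_G(Q) ≤ Q` and `N_G(T) ≤ N_G(Q)` for
every nontrivial subgroup `T` of `C_G(Q)`. -/
def IsLargeSubgroup (p : ℕ) {G : Type*} [Group G] (Q : Subgroup G) : Prop :=
  IsPGroup p Q ∧ Subgroup.centralizer (Q : Set G) ≤ Q ∧
    ∀ T : Subgroup G, T ≠ ⊥ → T ≤ Subgroup.centralizer (Q : Set G) →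
      Subgroup.normalizer (T : Set G) ≤ Subgroup.normalizer (Q : Set G)

open scoped commutatorElement
open Subgroup

section

variable {p : ℕ} {X : Type*} [Group X]

lemma IsPGroup.exists_ne_one_mem_centralizer [Finite X] [Fact p.Prime] {W P : Subgroup X}
    [W.Normal] (hW : IsPGroup p W) (hW1 : W ≠ ⊥) (hP : IsPGroup p P) :
    ∃ w ∈ W, w ≠ 1 ∧ w ∈ centralizer (P : Set X) := by
  let : MulAction P W := MulAction.compHom _ ((MulAut.conjNormal (H := W)).comp P.subtype)
  have hdvd : p ∣ Nat.card W := hW.card_eq_or_dvd.resolve_left (W.card_eq_one.not.mpr hW1)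
  have hfix : (1 : W) ∈ MulAction.fixedPoints P W := fun g =>
    map_one (MulAut.conjNormal (H := W) (g : X))
  obtain ⟨w, hw, hw1⟩ := hP.exists_fixed_point_of_prime_dvd_card_of_fixed_point W hdvd hfix
  refine ⟨w, w.2, fun h => hw1 (Subtype.ext h.symm), mem_centralizer_iff.mpr fun g hg => ?_⟩
  exact mul_inv_eq_iff_eq_mul.mp (congrArg Subtype.val (hw ⟨g, hg⟩))

lemma isPGroup_quotient_of_forall_pow_mem {T : Subgroup X} [T.Normal]
    (hT : ∀ x : X, ∃ n : ℕ, x ^ p ^ n ∈ T) : IsPGroup p (X ⧸ T) :=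
  QuotientGroup.mk_surjective.forall.mpr fun x => (hT x).imp fun _ hn => by
    rwa [← QuotientGroup.mk_pow, QuotientGroup.eq_one_iff]

lemma Sylow.sup_eq_top_of_isPGroup_quotient [Finite X] [Fact p.Prime] (S : Sylow p X)
    {T : Subgroup X} [T.Normal] (hT : IsPGroup p (X ⧸ T)) : T ⊔ S = ⊤ := by
  obtain ⟨k, hk⟩ := hT.exists_card_eq
  have hS : (S : Subgroup X).index.Coprime p :=
    Nat.coprime_comm.mp ((Nat.Prime.coprime_iff_not_dvd Fact.out).mpr S.not_dvd_index)
  have hTS : (T ⊔ S).index ∣ p ^ k := hk ▸ T.index_eq_card ▸ index_dvd_of_le le_sup_left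
  rw [← index_eq_one]
  exact ((hS.coprime_dvd_left (index_dvd_of_le le_sup_right)).pow_right k).eq_one_of_dvd hTS

lemma commute_pow_of_commutator_pow_eq_one {t u : X} {n : ℕ} (hc : Commute ⁅t, u⁆ u)
    (hn : ⁅t, u⁆ ^ n = 1) : Commute t (u ^ n) := by
  have hconj : t * u * t⁻¹ = ⁅t, u⁆ * u := by rw [commutatorElement_def]; group
  refine mul_inv_eq_iff_eq_mul.mp ?_
  rw [← conj_pow, hconj, hc.mul_pow, hn, one_mul]

lemma le_centralizer_of_minimal_normal [Finite X] [Fact p.Prime] {V U : Subgroup X}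
    [V.Normal] [U.Normal] (hV : IsPGroup p V) (hV1 : V ≠ ⊥)
    (hVmin : ∀ N : Subgroup X, N ≤ V → N.Normal → N = ⊥ ∨ N = V) (hU : IsPGroup p U) :
    V ≤ centralizer (U : Set X) := by
  obtain ⟨v, hvV, hv1, hvU⟩ := hV.exists_ne_one_mem_centralizer hV1 hU
  have hne : V ⊓ centralizer (U : Set X) ≠ ⊥ := fun h =>
    hv1 (mem_bot.mp (h ▸ ⟨hvV, hvU⟩))
  exact ((hVmin _ inf_le_left inferInstance).resolve_left hne).ge.trans inf_le_right

namespace IsLargeSubgroup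

variable {Q : Subgroup X} (hQ : IsLargeSubgroup p Q)
include hQ

lemma centralizer_singleton_le_normalizer {w : X} (hw1 : w ≠ 1)
    (hwQ : w ∈ centralizer (Q : Set X)) : centralizer {w} ≤ normalizer (Q : Set X) := by
  have hZ := hQ.2.2 (zpowers w) (zpowers_ne_bot.mpr hw1) (zpowers_le.mpr hwQ)
  rw [← centralizer_closure, ← zpowers_eq_closure]
  exact (centralizer_le_normalizer _).trans hZ

variable [Finite X] [Fact p.Prime] (hQn : ¬Q.Normal) {T : Subgroup X} [T.Normal]
  (hT : IsPGroup p (X ⧸ T))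
include hQn hT

lemma eq_bot_of_le_centralizer {W : Subgroup X} [W.Normal] (hW : IsPGroup p W)
    (hWT : W ≤ centralizer (T : Set X)) : W = ⊥ := by
  by_contra hW1
  obtain ⟨S, hQS⟩ := hQ.1.exists_le_sylow
  obtain ⟨w, hwW, hw1, hwS⟩ := hW.exists_ne_one_mem_centralizer hW1 S.isPGroup'
  have hN := hQ.centralizer_singleton_le_normalizer hw1 (centralizer_le hQS hwS)
  have hTw : T ≤ centralizer {w} := fun t ht =>
    mem_centralizer_singleton_iff.mpr (mem_centralizer_iff.mp (hWT hwW) t ht)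
  have hSw : (S : Subgroup X) ≤ centralizer {w} := fun s hs =>
    mem_centralizer_singleton_iff.mpr (mem_centralizer_iff.mp hwS s hs)
  refine hQn (normalizer_eq_top_iff.mp (top_le_iff.mp ?_))
  rw [← S.sup_eq_top_of_isPGroup_quotient hT]
  exact (sup_le hTw hSw).trans hN

lemma commutator_eq_bot {U : Subgroup X} [U.Normal] (hU : IsPGroup p U)
    (hUTU : ⁅⁅U, T⁆, U⁆ = ⊥) : ⁅U, U⁆ = ⊥ := by
  have hTUU : ⁅⁅T, U⁆, U⁆ = ⊥ := by rwa [commutator_comm T U]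
  refine hQ.eq_bot_of_le_centralizer hQn hT (hU.to_le (commutator_le_left U U)) ?_
  exact commutator_eq_bot_iff_le_centralizer.mp
    (commutator_commutator_eq_bot_of_rotate hUTU hTUU)

lemma pow_eq_one {U : Subgroup X} [U.Normal] (hU : IsPGroup p U) (hUab : ⁅U, U⁆ = ⊥)
    (hTU : ∀ t ∈ T, ∀ u ∈ U, ⁅t, u⁆ ^ p = 1) : ∀ u ∈ U, u ^ p = 1 := by
  have hpowU : (· ^ p) '' (U : Set X) ⊆ U := by
    rintro _ ⟨u, hu, rfl⟩
    exact U.pow_mem hu p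
  have hpowT : (· ^ p) '' (U : Set X) ⊆ centralizer (T : Set X) := by
    rintro _ ⟨u, hu, rfl⟩
    refine mem_centralizer_iff.mpr fun t ht =>
      commute_pow_of_commutator_pow_eq_one ?_ (hTU t ht u hu)
    exact commutator_eq_bot_iff_le_centralizer.mp hUab hu _
      (commutator_le_right T U (commutator_mem_commutator ht hu))
  have hbot := hQ.eq_bot_of_le_centralizer hQn hT (hU.to_le (normalClosure_le_normal hpowU))
    (normalClosure_le_normal hpowT)
  exact fun u hu => mem_bot.mp (hbot ▸ subset_normalClosure ⟨u, hu, rfl⟩)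

end IsLargeSubgroup

end

theorem stmt3_general {p : ℕ} (hp : p.Prime) {X : Type*} [Group X] [Finite X]
    (Q : Subgroup X) (hQ : IsLargeSubgroup p Q) (hQnotnorm : ¬ Q.Normal)
    (V U : Subgroup X)
    (hVnorm : V.Normal) (hUnorm : U.Normal)
    (hVp : IsPGroup p V) (hUp : IsPGroup p U)
    (hVnt : V ≠ ⊥)
    (hVexp : ∀ v ∈ V, v ^ p = 1)
    (hVirr : ∀ T : Subgroup X, T ≤ V → T.Normal → T = ⊥ ∨ T = V)
    (T : Subgroup X) (hTnorm : T.Normal)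
    (hTq : ∀ x : X, ∃ n : ℕ, x ^ p ^ n ∈ T)
    (hUT : ⁅U, T⁆ ≤ V) :
    (∀ u ∈ U, u ^ p = 1) ∧ (∀ u ∈ U, ∀ w ∈ U, u * w = w * u) := by
  have := Fact.mk hp
  have hT := isPGroup_quotient_of_forall_pow_mem hTq
  have hVU : ⁅V, U⁆ = ⊥ :=
    commutator_eq_bot_iff_le_centralizer.mpr (le_centralizer_of_minimal_normal hVp hVnt hVirr hUp)
  have hUab : ⁅U, U⁆ = ⊥ :=
    hQ.commutator_eq_bot hQnotnorm hT hUp (le_bot_iff.mp (hVU ▸ commutator_mono hUT le_rfl))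
  refine ⟨hQ.pow_eq_one hQnotnorm hT hUp hUab fun t ht u hu => hVexp _ (hUT ?_), ?_⟩
  · exact commutator_comm T U ▸ commutator_mem_commutator ht hu
  · exact fun u hu w hw => commutator_eq_bot_iff_le_centralizer.mp hUab hw u hu

/-- Let `p` be a prime, `X` a finite group, `V ≤ U` normal `p`-subgroups of `X`,
and `Q` a large `p`-subgroup of `X` which is not normal.  If `V` is a nontrivial irreducible
`GF(p)X`-module (elementary abelian, acted on nontrivially by conjugation, with no proper
nontrivial `X`-invariant subgroup) and `[U, O^p(X)] ≤ V` (with `T = O^p(X)`), then `U` is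
elementary abelian. -/
theorem stmt3 {p : ℕ} (hp : p.Prime) {X : Type*} [Group X] [Finite X]
    (Q : Subgroup X) (hQ : IsLargeSubgroup p Q) (hQnotnorm : ¬ Q.Normal)
    (V U : Subgroup X) (hVU : V ≤ U)
    (hVnorm : V.Normal) (hUnorm : U.Normal)
    (hVp : IsPGroup p V) (hUp : IsPGroup p U)
    (hVnt : V ≠ ⊥)
    (hVexp : ∀ v ∈ V, v ^ p = 1) (hVab : ∀ v ∈ V, ∀ w ∈ V, v * w = w * v)
    (hVactnt : ¬ V ≤ Subgroup.center X)
    (hVirr : ∀ T : Subgroup X, T ≤ V → T.Normal → T = ⊥ ∨ T = V)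
    (T : Subgroup X) (hTnorm : T.Normal)
    (hTq : ∀ x : X, ∃ n : ℕ, x ^ p ^ n ∈ T)
    (hTmin : ∀ N : Subgroup X, N.Normal → (∀ x : X, ∃ n : ℕ, x ^ p ^ n ∈ N) → T ≤ N)
    (hUT : ⁅U, T⁆ ≤ V) :
    (∀ u ∈ U, u ^ p = 1) ∧ (∀ u ∈ U, ∀ w ∈ U, u * w = w * u) :=
  stmt3_general hp Q hQ hQnotnorm V U hVnorm hUnorm hVp hUp hVnt hVexp hVirr T hTnorm hTq hUT
end

section
/- Let p be a prime, X a finite group, and V ≤ U normal p-subgroups of X. Let Q be a large p-subgroup of X (i.e. C_X(Q) ≤ Q and N_X(T) ≤ N_X(Q) for every nontrivial subgroup T of C_X(Q)) which is not normal in X. Assume that V is a nontrivial elementary abelian group on which X acts nontrivially by conjugation and which has no X-invariant subgroup other than 1 and V, and that [U, O^p(X)] ≤ V. If U is not contained in Ω₁(Z(O_p(X))), then there exists x ∈ U with x ∉ Ω₁(Z(O_p(X))) and [x,X] ≤ U ∩ Ω₁(Z(O_p(X))), such that, writing Y = O_p(X), the map g ↦ [g,x] is an X-equivariant group homomorphism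 from Y onto the subgroup [Y,x] = {[g,x] : g ∈ Y} with kernel C_Y(x), and V ≤ [Y,x]. -/
/-- Membership in `Ω₁(Z(P))` for a subgroup `P`: the elements of `Z(P)` of order dividing
`p`. -/
def memOmega1ZP {G : Type*} [Group G] (p : ℕ) (P : Subgroup G) (x : G) : Prop :=
  x ∈ P ∧ x ^ p = 1 ∧ ∀ g ∈ P, x * g = g * x

open Subgroup

theorem IsPGroup.quotient_of_forall_pow_mem {p : ℕ} {G : Type*} [Group G] {K : Subgroup G}
    [K.Normal] (hK : ∀ g : G, ∃ n : ℕ, g ^ p ^ n ∈ K) : IsPGroup p (G ⧸ K) := by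
  intro q
  induction q using QuotientGroup.induction_on with
  | H g =>
    obtain ⟨n, hn⟩ := hK g
    exact ⟨n, by rwa [← QuotientGroup.mk_pow, QuotientGroup.eq_one_iff]⟩

section FixedPoints

variable {p : ℕ} [Fact p.Prime]

theorem IsPGroup.exists_ne_one_forall_apply_eq {H M : Type*} [Group H] [Group M] [Finite M]
    [Nontrivial M] (hH : IsPGroup p H) (hM : IsPGroup p M) (φ : H →* MulAut M) :
    ∃ m : M, m ≠ 1 ∧ ∀ h, φ h m = m := by
  let _ := MulAction.compHom M φ
  have hpM : p ∣ Nat.card M := hM.card_eq_or_dvd.resolve_left Finite.one_lt_card.ne'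
  obtain ⟨m, hm, hne⟩ := hH.exists_fixed_point_of_prime_dvd_card_of_fixed_point M hpM
    (a := 1) fun h => map_one (φ h)
  exact ⟨m, hne.symm, hm⟩

variable {G : Type*} [Group G] [Finite G]

theorem exists_ne_one_mem_center_of_commutator_eq_bot {A K : Subgroup G} [A.Normal] [K.Normal]
    (hA : IsPGroup p A) (hA1 : A ≠ ⊥) (hK : ∀ g : G, ∃ n : ℕ, g ^ p ^ n ∈ K)
    (hKA : ⁅K, A⁆ = ⊥) : ∃ a ∈ A, a ≠ 1 ∧ a ∈ center G := by
  have hKker : K ≤ (MulAut.conjNormal : G →* MulAut A).ker := fun k hk => by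
    refine MonoidHom.mem_ker.mpr (MulEquiv.ext fun a => Subtype.ext ?_)
    rw [MulAut.conjNormal_apply, MulAut.one_apply, mul_inv_eq_iff_eq_mul]
    exact (mem_centralizer_iff.mp (commutator_eq_bot_iff_le_centralizer.mp hKA hk) a a.2).symm
  have := (nontrivial_iff_ne_bot A).mpr hA1
  obtain ⟨a, ha1, ha⟩ := (IsPGroup.quotient_of_forall_pow_mem hK).exists_ne_one_forall_apply_eq hA
    (QuotientGroup.lift K MulAut.conjNormal hKker)
  refine ⟨a, a.2, fun h => ha1 (Subtype.ext h), mem_center_iff.mpr fun g => ?_⟩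
  have hga := congrArg Subtype.val (ha g)
  rwa [QuotientGroup.lift_mk, MulAut.conjNormal_apply, mul_inv_eq_iff_eq_mul] at hga

theorem exists_mem_notMem_forall_commutator_mem {A B K : Subgroup G} [A.Normal] [B.Normal]
    [K.Normal] (hA : IsPGroup p A) (hAB : ¬ A ≤ B) (hK : ∀ g : G, ∃ n : ℕ, g ^ p ^ n ∈ K)
    (hKA : ⁅K, A⁆ ≤ B) : ∃ a ∈ A, a ∉ B ∧ ∀ g : G, a⁻¹ * g⁻¹ * a * g ∈ B := by
  set f := QuotientGroup.mk' B
  have hf := QuotientGroup.mk'_surjective B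
  have := (inferInstance : A.Normal).map f hf
  have := (inferInstance : K.Normal).map f hf
  obtain ⟨_, ⟨a, haA, rfl⟩, ha1, ha⟩ := exists_ne_one_mem_center_of_commutator_eq_bot
    (hA.map f) (by rwa [Ne, Subgroup.map_eq_bot_iff, QuotientGroup.ker_mk'])
    (fun q => by
      obtain ⟨g, rfl⟩ := hf q
      obtain ⟨n, hn⟩ := hK g
      exact ⟨n, mem_map.mpr ⟨_, hn, map_pow f g _⟩⟩)
    (by rwa [← map_commutator, Subgroup.map_eq_bot_iff, QuotientGroup.ker_mk'])
  refine ⟨a, haA, fun h => ha1 ((QuotientGroup.eq_one_iff a).mpr h), fun g => ?_⟩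
  have hga : (g : G ⧸ B) * a = a * g := mem_center_iff.mp ha g
  rw [← QuotientGroup.eq_one_iff, QuotientGroup.mk_mul, QuotientGroup.mk_mul, QuotientGroup.mk_mul,
    QuotientGroup.mk_inv, QuotientGroup.mk_inv, mul_assoc _ (a : G ⧸ B), ← hga]
  group

end FixedPoints

section Omega

variable {G : Type*} [Group G]

def omegaOneCenter (p : ℕ) (P : Subgroup G) : Subgroup G where
  carrier := {y | memOmega1ZP p P y}
  one_mem' := ⟨P.one_mem, one_pow p, fun g _ => by rw [one_mul, mul_one]⟩
  mul_mem' := by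
    rintro a b ⟨haP, hap, hac⟩ ⟨hbP, hbp, hbc⟩
    refine ⟨mul_mem haP hbP, ?_, fun g hg => ?_⟩
    · rw [(show Commute a b from hac b hbP).mul_pow, hap, hbp, one_mul]
    · rw [mul_assoc, hbc g hg, ← mul_assoc, hac g hg, mul_assoc]
  inv_mem' := by
    rintro a ⟨haP, hap, hac⟩
    exact ⟨inv_mem haP, by rw [inv_pow, hap, inv_one], fun g hg =>
      (show Commute a g from hac g hg).inv_left⟩

variable {p : ℕ} {P : Subgroup G}

theorem omegaOneCenter_le_centralizer : omegaOneCenter p P ≤ centralizer P :=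
  fun _ hy => mem_centralizer_iff.mpr fun g hg => (hy.2.2 g hg).symm

instance omegaOneCenter_normal [P.Normal] : (omegaOneCenter p P).Normal where
  conj_mem y hy g := by
    have hyc := normal_centralizer.conj_mem y (omegaOneCenter_le_centralizer hy) g
    refine ⟨‹P.Normal›.conj_mem y hy.1 g, by rw [conj_pow, hy.2.1, mul_one, mul_inv_cancel],
      fun h hh => (mem_centralizer_iff.mp hyc h hh).symm⟩

end Omega

theorem inv_mul_inv_mul_mul_mul_eq_one_iff {G : Type*} [Group G] (g x : G) :
    g⁻¹ * x⁻¹ * g * x = 1 ↔ g * x = x * g := by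
  rw [show g⁻¹ * x⁻¹ * g * x = (x * g)⁻¹ * (g * x) by group, inv_mul_eq_one, eq_comm]

section CommutatorMap

variable {G : Type*} [Group G] {P : Subgroup G} {x : G}

theorem commutator_mul_of_forall_mem_centralizer
    (hx : ∀ g : G, x⁻¹ * g⁻¹ * x * g ∈ centralizer P) (g : G) {h : G} (hh : h ∈ P) :
    (g * h)⁻¹ * x⁻¹ * (g * h) * x = (g⁻¹ * x⁻¹ * g * x) * (h⁻¹ * x⁻¹ * h * x) := by
  have hch : h * (g⁻¹ * x⁻¹ * g * x) = (g⁻¹ * x⁻¹ * g * x) * h := by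
    have hch' := mem_centralizer_iff.mp (inv_mem (hx g)) h hh
    rwa [show (x⁻¹ * g⁻¹ * x * g)⁻¹ = g⁻¹ * x⁻¹ * g * x by group] at hch'
  calc (g * h)⁻¹ * x⁻¹ * (g * h) * x
      = h⁻¹ * ((g⁻¹ * x⁻¹ * g * x) * h) * (h⁻¹ * x⁻¹ * h * x) := by group
    _ = (g⁻¹ * x⁻¹ * g * x) * (h⁻¹ * x⁻¹ * h * x) := by rw [← hch]; group

def commutatorHom (hx : ∀ g : G, x⁻¹ * g⁻¹ * x * g ∈ centralizer P) : P →* G where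
  toFun g := (g : G)⁻¹ * x⁻¹ * g * x
  map_one' := by simp
  map_mul' g h := commutator_mul_of_forall_mem_centralizer hx g h.2

theorem commutatorHom_apply (hx : ∀ g : G, x⁻¹ * g⁻¹ * x * g ∈ centralizer P) (g : P) :
    commutatorHom hx g = (g : G)⁻¹ * x⁻¹ * g * x := rfl

theorem coe_commutatorHom_range (hx : ∀ g : G, x⁻¹ * g⁻¹ * x * g ∈ centralizer P) :
    ((commutatorHom hx).range : Set G) = {w : G | ∃ g ∈ P, w = g⁻¹ * x⁻¹ * g * x} := by
  ext w
  simp only [SetLike.mem_coe, MonoidHom.mem_range, commutatorHom_apply, Subtype.exists,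
    exists_prop, Set.mem_ofPred_eq, eq_comm]

theorem commutator_conj_of_forall_mem_centralizer (hxP : x ∈ P)
    (hx : ∀ g : G, x⁻¹ * g⁻¹ * x * g ∈ centralizer P) (l : G) {g : G} (hg : g ∈ P) :
    (l⁻¹ * g * l)⁻¹ * x⁻¹ * (l⁻¹ * g * l) * x = l⁻¹ * (g⁻¹ * x⁻¹ * g * x) * l := by
  obtain ⟨d, hdC, hxd⟩ : ∃ d ∈ centralizer P, l * x * l⁻¹ = x * d :=
    ⟨x⁻¹ * l * x * l⁻¹, by simpa only [inv_inv] using hx l⁻¹, by group⟩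
  have hdg : d * g = g * d := (mem_centralizer_iff.mp hdC g hg).symm
  have hdc : (g⁻¹ * x⁻¹ * g * x) * d = d * (g⁻¹ * x⁻¹ * g * x) :=
    mem_centralizer_iff.mp hdC _ (mul_mem (mul_mem (mul_mem (inv_mem hg) (inv_mem hxP)) hg) hxP)
  calc (l⁻¹ * g * l)⁻¹ * x⁻¹ * (l⁻¹ * g * l) * x
      = l⁻¹ * (g⁻¹ * (l * x * l⁻¹)⁻¹ * g * (l * x * l⁻¹)) * l := by group
    _ = l⁻¹ * ((d * g)⁻¹ * (x⁻¹ * g * x) * d) * l := by rw [hxd]; group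
    _ = l⁻¹ * (d⁻¹ * ((g⁻¹ * x⁻¹ * g * x) * d)) * l := by rw [hdg]; group
    _ = l⁻¹ * (g⁻¹ * x⁻¹ * g * x) * l := by rw [hdc]; group

theorem commutatorHom_range_normal [P.Normal] (hxP : x ∈ P)
    (hx : ∀ g : G, x⁻¹ * g⁻¹ * x * g ∈ centralizer P) : (commutatorHom hx).range.Normal where
  conj_mem := by
    rintro _ ⟨g, rfl⟩ l
    refine ⟨⟨l * g * l⁻¹, ‹P.Normal›.conj_mem g g.2 l⟩, ?_⟩
    simpa only [commutatorHom_apply, inv_inv] using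
      commutator_conj_of_forall_mem_centralizer hxP hx l⁻¹ g.2

variable {p : ℕ}

theorem pow_mem_center_of_forall_mem_omegaOneCenter (hxP : x ∈ P)
    (hx : ∀ g : G, x⁻¹ * g⁻¹ * x * g ∈ omegaOneCenter p P) : x ^ p ∈ center G := by
  refine mem_center_iff.mpr fun g => ?_
  obtain ⟨-, hkp, hkc⟩ := hx g
  have hxk : Commute x (x⁻¹ * g⁻¹ * x * g) := (hkc x hxP).symm
  have hconj : g⁻¹ * x ^ p * g = x ^ p :=
    calc g⁻¹ * x ^ p * g = (g⁻¹ * x * g) ^ p := by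
          simpa only [inv_inv] using (conj_pow (a := g⁻¹)).symm
      _ = (x * (x⁻¹ * g⁻¹ * x * g)) ^ p := by group
      _ = x ^ p := by rw [hxk.mul_pow, hkp, mul_one]
  calc g * x ^ p = g * (g⁻¹ * x ^ p * g) := by rw [hconj]
    _ = x ^ p * g := by group

theorem commutatorHom_range_ne_bot (hZ : center G = ⊥) (hxP : x ∈ P)
    (hx : ∀ g : G, x⁻¹ * g⁻¹ * x * g ∈ omegaOneCenter p P) (hxW : x ∉ omegaOneCenter p P) :
    (commutatorHom fun g => omegaOneCenter_le_centralizer (hx g)).range ≠ ⊥ := by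
  intro hbot
  refine hxW ⟨hxP, ?_, fun g hg => ?_⟩
  · simpa only [hZ, mem_bot] using pow_mem_center_of_forall_mem_omegaOneCenter hxP hx
  · have hg1 : commutatorHom _ ⟨g, hg⟩ ∈
        (commutatorHom fun g => omegaOneCenter_le_centralizer (hx g)).range := ⟨⟨g, hg⟩, rfl⟩
    rw [hbot, mem_bot, commutatorHom_apply, inv_mul_inv_mul_mul_mul_eq_one_iff] at hg1
    exact hg1.symm

end CommutatorMap

theorem IsLargeSubgroup.center_eq_bot {p : ℕ} {G : Type*} [Group G] {Q : Subgroup G}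
    (hQ : IsLargeSubgroup p Q) (hQn : ¬ Q.Normal) : center G = ⊥ := by
  by_contra hZ
  refine hQn (normalizer_eq_top_iff.mp (top_le_iff.mp ?_))
  calc ⊤ = normalizer (center G : Set G) := (normalizer_eq_top_iff.mpr inferInstance).symm
    _ ≤ normalizer (Q : Set G) := hQ.2.2 _ hZ (center_le_centralizer _)

section Minimal

variable {p : ℕ} [Fact p.Prime] {G : Type*} [Group G] [Finite G]

theorem le_centralizer_of_minimal_normal_s4 {V P : Subgroup G} [V.Normal] [P.Normal]
    (hP : IsPGroup p P) (hVP : V ≤ P)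
    (hV : ∀ N : Subgroup G, N ≤ V → N.Normal → N = ⊥ ∨ N = V) : V ≤ centralizer P := by
  obtain rfl | hV1 := eq_or_ne V ⊥
  · exact bot_le
  have := (nontrivial_iff_ne_bot V).mpr hV1
  obtain ⟨v, hv1, hv⟩ := hP.exists_ne_one_forall_apply_eq (hP.to_le hVP)
    ((MulAut.conjNormal : G →* MulAut V).comp P.subtype)
  have hvC : (v : G) ∈ V ⊓ centralizer P := by
    refine ⟨v.2, mem_centralizer_iff.mpr fun g hg => ?_⟩
    have hgv := congrArg Subtype.val (hv ⟨g, hg⟩)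
    rwa [MonoidHom.comp_apply, MulAut.conjNormal_apply, mul_inv_eq_iff_eq_mul] at hgv
  rcases hV (V ⊓ centralizer P) inf_le_left inferInstance with h | h
  · rw [h, mem_bot] at hvC
    exact absurd (Subtype.ext hvC) hv1
  · exact inf_eq_left.mp h

theorem le_of_commutator_le_of_center_eq_bot {I T V : Subgroup G} [I.Normal] [T.Normal]
    (hZ : center G = ⊥) (hI : IsPGroup p I) (hI1 : I ≠ ⊥) (hT : ∀ g : G, ∃ n : ℕ, g ^ p ^ n ∈ T)
    (hITV : ⁅I, T⁆ ≤ V) (hV : ∀ N : Subgroup G, N ≤ V → N.Normal → N = ⊥ ∨ N = V) : V ≤ I := by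
  rcases hV _ hITV inferInstance with h | h
  · obtain ⟨a, -, ha1, haZ⟩ :=
      exists_ne_one_mem_center_of_commutator_eq_bot hI hI1 hT (by rwa [commutator_comm])
    rw [hZ, mem_bot] at haZ
    exact absurd haZ ha1
  · exact h ▸ commutator_le_left I T

end Minimal

theorem stmt4_general {p : ℕ} (hp : p.Prime) {X : Type*} [Group X] [Finite X]
    (Q : Subgroup X) (hQ : IsLargeSubgroup p Q) (hQnotnorm : ¬ Q.Normal)
    (V U : Subgroup X)
    (hVnorm : V.Normal) (hUnorm : U.Normal)
    (hVp : IsPGroup p V) (hUp : IsPGroup p U)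
    (hVexp : ∀ v ∈ V, v ^ p = 1)
    (hVirr : ∀ T : Subgroup X, T ≤ V → T.Normal → T = ⊥ ∨ T = V)
    (T : Subgroup X) (hTnorm : T.Normal)
    (hTq : ∀ x : X, ∃ n : ℕ, x ^ p ^ n ∈ T)
    (hUT : ⁅U, T⁆ ≤ V)
    (P : Subgroup X) (hPnorm : P.Normal) (hPp : IsPGroup p P)
    (hPmax : ∀ N : Subgroup X, N.Normal → IsPGroup p N → N ≤ P)
    (hUnotOmega : ¬ ∀ u ∈ U, memOmega1ZP p P u) :
    ∃ x ∈ U, ¬ memOmega1ZP p P x ∧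
      -- [x,X] ≤ U ∩ Ω₁(Z(O_p(X)))
      (∀ g : X, x⁻¹ * g⁻¹ * x * g ∈ U ∧ memOmega1ZP p P (x⁻¹ * g⁻¹ * x * g)) ∧
      -- g ↦ [g,x] maps Y = O_p(X) into [Y,x] which is a subgroup (its image)
      (∃ I : Subgroup X, (I : Set X) = {w : X | ∃ g ∈ P, w = g⁻¹ * x⁻¹ * g * x}) ∧
      -- homomorphism property on Y
      (∀ g ∈ P, ∀ h ∈ P,
        (g * h)⁻¹ * x⁻¹ * (g * h) * x = (g⁻¹ * x⁻¹ * g * x) * (h⁻¹ * x⁻¹ * h * x)) ∧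
      -- kernel is C_Y(x)
      (∀ g ∈ P, (g⁻¹ * x⁻¹ * g * x = 1 ↔ g * x = x * g)) ∧
      -- X-equivariance
      (∀ l : X, ∀ g ∈ P,
        (l⁻¹ * g * l)⁻¹ * x⁻¹ * (l⁻¹ * g * l) * x = l⁻¹ * (g⁻¹ * x⁻¹ * g * x) * l) ∧
      -- V ≤ [Y,x]
      (∀ v ∈ V, ∃ g ∈ P, v = g⁻¹ * x⁻¹ * g * x) := by
  have := Fact.mk hp
  have hZ := hQ.center_eq_bot hQnotnorm
  have hVP := hPmax V hVnorm hVp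
  have hVC := le_centralizer_of_minimal_normal_s4 hPp hVP hVirr
  have hVW : V ≤ omegaOneCenter p P := fun v hv =>
    ⟨hVP hv, hVexp v hv, fun g hg => (mem_centralizer_iff.mp (hVC hv) g hg).symm⟩
  obtain ⟨x, hxU, hxUW, hx⟩ := exists_mem_notMem_forall_commutator_mem (B := U ⊓ omegaOneCenter p P)
    hUp (fun h => hUnotOmega fun u hu => (h hu).2) hTq
    (le_inf (commutator_le_right T U) ((commutator_comm T U).le.trans (hUT.trans hVW)))
  have hxP := hPmax U hUnorm hUp hxU
  have hxW : ∀ g, x⁻¹ * g⁻¹ * x * g ∈ omegaOneCenter p P := fun g => (hx g).2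
  have hxC := fun g => omegaOneCenter_le_centralizer (hxW g)
  have hIU : (commutatorHom hxC).range ≤ U := by
    rintro _ ⟨g, rfl⟩
    exact mul_mem (by simpa only [inv_inv] using hUnorm.conj_mem _ (inv_mem hxU) (g : X)⁻¹) hxU
  have := commutatorHom_range_normal hxP hxC
  refine ⟨x, hxU, fun h => hxUW ⟨hxU, h⟩, hx, ⟨_, coe_commutatorHom_range hxC⟩,
    fun g _ h hh => commutator_mul_of_forall_mem_centralizer hxC g hh,
    fun g _ => inv_mul_inv_mul_mul_mul_eq_one_iff g x,
    fun l g hg => commutator_conj_of_forall_mem_centralizer hxP hxC l hg, fun v hv => ?_⟩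
  obtain ⟨g, hg⟩ := le_of_commutator_le_of_center_eq_bot hZ (hUp.to_le hIU)
    (commutatorHom_range_ne_bot hZ hxP hxW fun h => hxUW ⟨hxU, h⟩) hTq
    ((commutator_mono hIU le_rfl).trans hUT) hVirr hv
  exact ⟨g, g.2, hg.symm⟩

/-- with `V ≤ U` normal `p`-subgroups of the finite group `X`, `Q` large and
not normal, `V` a nontrivial irreducible `GF(p)X`-module, `[U, O^p(X)] ≤ V`, and
`U ≰ Ω₁(Z(O_p(X)))`: there is `x ∈ U` with `x ∉ Ω₁(Z(O_p(X)))` and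
`[x,X] ≤ U ∩ Ω₁(Z(O_p(X)))`, such that (writing `Y = O_p(X)` and `[g,x] = g⁻¹x⁻¹gx`) the map
`g ↦ [g,x]` is an `X`-equivariant homomorphism from `Y` onto the subgroup
`[Y,x] = {[g,x] : g ∈ Y}` with kernel `C_Y(x)`, and `V ≤ [Y,x]`. -/
theorem stmt4 {p : ℕ} (hp : p.Prime) {X : Type*} [Group X] [Finite X]
    (Q : Subgroup X) (hQ : IsLargeSubgroup p Q) (hQnotnorm : ¬ Q.Normal)
    (V U : Subgroup X) (hVU : V ≤ U)
    (hVnorm : V.Normal) (hUnorm : U.Normal)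
    (hVp : IsPGroup p V) (hUp : IsPGroup p U)
    (hVnt : V ≠ ⊥)
    (hVexp : ∀ v ∈ V, v ^ p = 1) (hVab : ∀ v ∈ V, ∀ w ∈ V, v * w = w * v)
    (hVactnt : ¬ V ≤ Subgroup.center X)
    (hVirr : ∀ T : Subgroup X, T ≤ V → T.Normal → T = ⊥ ∨ T = V)
    (T : Subgroup X) (hTnorm : T.Normal)
    (hTq : ∀ x : X, ∃ n : ℕ, x ^ p ^ n ∈ T)
    (hTmin : ∀ N : Subgroup X, N.Normal → (∀ x : X, ∃ n : ℕ, x ^ p ^ n ∈ N) → T ≤ N)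
    (hUT : ⁅U, T⁆ ≤ V)
    (P : Subgroup X) (hPnorm : P.Normal) (hPp : IsPGroup p P)
    (hPmax : ∀ N : Subgroup X, N.Normal → IsPGroup p N → N ≤ P)
    (hUnotOmega : ¬ ∀ u ∈ U, memOmega1ZP p P u) :
    ∃ x ∈ U, ¬ memOmega1ZP p P x ∧
      -- [x,X] ≤ U ∩ Ω₁(Z(O_p(X)))
      (∀ g : X, x⁻¹ * g⁻¹ * x * g ∈ U ∧ memOmega1ZP p P (x⁻¹ * g⁻¹ * x * g)) ∧
      -- g ↦ [g,x] maps Y = O_p(X) into [Y,x] which is a subgroup (its image)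
      (∃ I : Subgroup X, (I : Set X) = {w : X | ∃ g ∈ P, w = g⁻¹ * x⁻¹ * g * x}) ∧
      -- homomorphism property on Y
      (∀ g ∈ P, ∀ h ∈ P,
        (g * h)⁻¹ * x⁻¹ * (g * h) * x = (g⁻¹ * x⁻¹ * g * x) * (h⁻¹ * x⁻¹ * h * x)) ∧
      -- kernel is C_Y(x)
      (∀ g ∈ P, (g⁻¹ * x⁻¹ * g * x = 1 ↔ g * x = x * g)) ∧
      -- X-equivariance
      (∀ l : X, ∀ g ∈ P,
        (l⁻¹ * g * l)⁻¹ * x⁻¹ * (l⁻¹ * g * l) * x = l⁻¹ * (g⁻¹ * x⁻¹ * g * x) * l) ∧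
      -- V ≤ [Y,x]
      (∀ v ∈ V, ∃ g ∈ P, v = g⁻¹ * x⁻¹ * g * x) :=
  stmt4_general hp Q hQ hQnotnorm V U hVnorm hUnorm hVp hUp hVexp hVirr T hTnorm hTq hUT P hPnorm
    hPp hPmax hUnotOmega
end

section
/- Let p be a prime, V a finite p-group, and X a finite group acting faithfully on V such that every normal p-subgroup of X is trivial (O_p(X) = 1). Let A ≤ X be an elementary abelian p-subgroup of order at least p² with the property that C_V(A) = C_V(a) for every nonidentity a ∈ A. If L is a nontrivial subgroup of X with L = [L,A], then A acts faithfully on L, i.e. no nonidentity element of A centralizes L. -/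
/-!
Suppose `a ≠ 1` in `A` centralizes `L`. Both `A` and `L` commute with `a`, and both fix
`C_V(a) = C_V(A)` pointwise: `A` by hypothesis, and `L = [L, A]` because `L` normalizes `C_V(a)`
while `A` fixes it. By Thompson's `P × Q` lemma for `⟨a⟩ × ⟨y⟩`, a `p'`-element `y` commuting with
`a` and centralizing `C_V(a)` centralizes `V`, so `y = 1` by faithfulness. Hence `⟨L, A⟩` lies in a
`p`-group, which is nilpotent, and there `L = [L, A]` forces `L = 1`.
-/

open Subgroup MulAction
open scoped Pointwise

theorem Subgroup.normal_of_le_center {G : Type*} [Group G] {U : Subgroup G} (hU : U ≤ center G) :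
    U.Normal :=
  ⟨fun u hu g => by rwa [mem_center_iff.mp (hU hu) g, mul_inv_cancel_right]⟩

theorem Subgroup.eq_bot_of_le_commutator {G : Type*} [Group G] {H L : Subgroup G}
    [Group.IsNilpotent H] (hLH : L ≤ H) (hL : L ≤ ⁅L, H⁆) : L = ⊥ := by
  obtain ⟨n, hn⟩ := (isNilpotent_iff_lowerCentralSeries H).mp ‹_›
  have hle : ∀ j, L ≤ H.lowerCentralSeries j := by
    intro j
    induction j with
    | zero => exact hLH
    | succ j ih => exact hL.trans (commutator_mono ih le_rfl)
  exact le_bot_iff.mp (hn ▸ hle n)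

theorem IsPGroup.of_coprime_pow_eq_one_imp_eq_one {p : ℕ} {G : Type*} [Group G] [Finite G]
    (hp : p.Prime) (h : ∀ g : G, ∀ m, p.Coprime m → g ^ m = 1 → g = 1) : IsPGroup p G := fun g =>
  ⟨(orderOf g).factorization p, h _ _ (Nat.coprime_ordCompl hp (orderOf_pos g).ne') <| by
    rw [← pow_mul, Nat.ordProj_mul_ordCompl_eq_self, pow_orderOf_eq_one]⟩

namespace MulAction

variable {G α : Type*} [Group G] [MulAction G α]

theorem centralizer_le_stabilizer_fixedBy (a : G) : centralizer {a} ≤ stabilizer G (fixedBy α a) :=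
  fun h hh => by
    rw [mem_stabilizer_iff, smul_fixedBy, mem_centralizer_singleton_iff.mp hh, mul_inv_cancel_right]

theorem commutator_stabilizer_fixingSubgroup_le (s : Set α) :
    ⁅stabilizer G s, fixingSubgroup G s⁆ ≤ fixingSubgroup G s := by
  rw [commutator_le]
  intro h hh k hk x
  have hx : h⁻¹ • (x : α) ∈ s :=
    (mem_stabilizer_iff.mp (inv_mem hh)).subset (Set.smul_mem_smul_set x.2)
  rw [commutatorElement_def, mul_smul, mul_smul, mul_smul, inv_smul_eq_iff.mpr (hk x).symm,
    hk ⟨_, hx⟩, smul_inv_smul]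

end MulAction

namespace MulAut

variable {p : ℕ} {V : Type*} [Group V]

theorem pow_apply_eq_mul_pow {g : MulAut V} {v d : V} (hv : g v = v * d) (hd : g d = d) (k : ℕ) :
    (g ^ k) v = v * d ^ k := by
  induction k with
  | zero => simp
  | succ k ih => rw [pow_succ', mul_apply, ih, map_mul, map_pow, hv, hd, mul_assoc, ← pow_succ']

theorem apply_eq_self_of_apply_inv_mul_apply (hV : IsPGroup p V) {m : ℕ} (hm : p.Coprime m)
    {g : MulAut V} (hg : g ^ m = 1) {v : V} (h : g (v⁻¹ * g v) = v⁻¹ * g v) : g v = v := by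
  have hpow : v * (v⁻¹ * g v) ^ m = v := by
    rw [← pow_apply_eq_mul_pow (mul_inv_cancel_left v (g v)).symm h, hg, one_apply]
  have hord : orderOf (v⁻¹ * g v) = 1 :=
    (hV.orderOf_coprime hm _).eq_one_of_dvd
      (orderOf_dvd_of_pow_eq_one (mul_eq_left.mp hpow))
  rw [orderOf_eq_one_iff, inv_mul_eq_one] at hord
  exact hord.symm

theorem apply_eq_self_of_inv_mul_apply_mem_center (hV : IsPGroup p V) {m : ℕ} (hm : p.Coprime m)
    {f g : MulAut V} (hfg : Commute f g) (hg : g ^ m = 1) (hfix : ∀ v, f v = v → g v = v)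
    {z : V} (hc : z⁻¹ * f z ∈ center V) (hf : f (z⁻¹ * f z) = z⁻¹ * f z) : g z = z := by
  set c := z⁻¹ * f z
  have hfz : f z = z * c := (mul_inv_cancel_left z (f z)).symm
  have hgc : g c = c := hfix c hf
  have hfd : f (z⁻¹ * g z) = z⁻¹ * g z := by
    calc f (z⁻¹ * g z) = c⁻¹ * (z⁻¹ * g z) * c := by
          rw [map_mul, map_inv, ← mul_apply, hfg.eq, mul_apply, hfz, map_mul, hgc]; group
      _ = z⁻¹ * g z := by rw [mul_assoc, mem_center_iff.mp hc, inv_mul_cancel_left]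
  exact apply_eq_self_of_apply_inv_mul_apply hV hm hg (hfix _ hfd)

def centerSubMulAction : SubMulAction (MulAut V) V where
  carrier := center V
  smul_mem' f _ hz := MulEquivClass.apply_mem_center f hz

theorem exists_mem_center_ne_one_forall_apply_eq [Finite V] [Nontrivial V] [Fact p.Prime]
    (hV : IsPGroup p V) {P : Subgroup (MulAut V)} (hP : IsPGroup p P) :
    ∃ z ∈ center V, z ≠ 1 ∧ ∀ f ∈ P, f z = z := by
  have := hV.center_nontrivial
  have hdvd : p ∣ Nat.card (centerSubMulAction (V := V)) :=
    ((hV.to_subgroup (center V)).card_eq_or_dvd).resolve_left Finite.one_lt_card.ne'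
  obtain ⟨⟨z, hz⟩, hfix, hne⟩ :=
    hP.exists_fixed_point_of_prime_dvd_card_of_fixed_point (centerSubMulAction (V := V)) hdvd
      (a := ⟨1, (center V).one_mem⟩) fun f => Subtype.ext (map_one (f : MulAut V))
  exact ⟨z, hz, fun h => hne (Subtype.ext h.symm), fun f hf =>
    congrArg Subtype.val (hfix ⟨f, hf⟩)⟩

def quotientHom (U : Subgroup V) [U.Normal] :
    fixingSubgroup (MulAut V) (U : Set V) →* MulAut (V ⧸ U) where
  toFun f := QuotientGroup.congr U U f.1 <| by
    ext v
    refine ⟨?_, fun hv => ⟨v, hv, f.2 ⟨v, hv⟩⟩⟩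
    rintro ⟨u, hu, rfl⟩
    simpa [← MulAut.smul_def, f.2 ⟨u, hu⟩] using hu
  map_one' := by
    ext x
    induction x using QuotientGroup.induction_on
    rfl
  map_mul' f g := by
    ext x
    induction x using QuotientGroup.induction_on
    rfl

@[simp]
theorem quotientHom_apply_mk (U : Subgroup V) [U.Normal]
    (f : fixingSubgroup (MulAut V) (U : Set V)) (v : V) : quotientHom U f v = (f.1 v : V ⧸ U) :=
  rfl

/-- Thompson's `P × Q` lemma for cyclic `P` and `Q`. The induction passes to `V ⧸ U` where
`U` is the (nontrivial) group of `f`-fixed central elements. -/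
theorem eq_one_of_commute_of_fixed_imp_fixed [Finite V] (hp : p.Prime) (hV : IsPGroup p V)
    {k m : ℕ} (hm : p.Coprime m) {f g : MulAut V} (hfg : Commute f g)
    (hf : f ^ p ^ k = 1) (hg : g ^ m = 1) (hfix : ∀ v, f v = v → g v = v) : g = 1 := by
  induction hn : Nat.card V using Nat.strong_induction_on generalizing V with
  | _ n ih =>
  rcases subsingleton_or_nontrivial V with hV1 | hV1
  · ext v
    exact Subsingleton.elim _ _
  have : Fact p.Prime := ⟨hp⟩
  have hP : IsPGroup p (zpowers f) := by
    rintro ⟨_, j, rfl⟩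
    exact ⟨k, Subtype.ext (by rw [SubmonoidClass.coe_pow, ← zpow_natCast, ← zpow_mul, mul_comm,
      zpow_mul, zpow_natCast, hf, one_zpow, OneMemClass.coe_one])⟩
  obtain ⟨z, hzc, hz1, hfz⟩ := exists_mem_center_ne_one_forall_apply_eq hV hP
  let U : Subgroup V := center V ⊓ (f : V →* V).eqLocus (MonoidHom.id V)
  have : U.Normal := normal_of_le_center inf_le_left
  have hfU : f ∈ fixingSubgroup (MulAut V) (U : Set V) := fun u => u.2.2
  have hgU : g ∈ fixingSubgroup (MulAut V) (U : Set V) := fun u => hfix _ u.2.2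
  have hcard : Nat.card (V ⧸ U) < n := by
    have hU : 1 < Nat.card U := (one_lt_card_iff_ne_bot U).mpr fun hU =>
      hz1 ((mem_bot).mp (hU ▸ ⟨hzc, hfz f (mem_zpowers f)⟩))
    rw [← hn, card_eq_card_quotient_mul_card_subgroup U]
    exact lt_mul_of_one_lt_right Nat.card_pos hU
  have hg' : quotientHom U ⟨g, hgU⟩ = 1 := by
    refine ih _ hcard (hV.to_quotient U) (f := quotientHom U ⟨f, hfU⟩)
      (Commute.map (Subtype.ext hfg.eq) _) ?_ ?_ ?_ rfl
    · rw [← map_pow, show (⟨f, hfU⟩ : fixingSubgroup _ _) ^ p ^ k = 1 from Subtype.ext hf, map_one]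
    · rw [← map_pow, show (⟨g, hgU⟩ : fixingSubgroup _ _) ^ m = 1 from Subtype.ext hg, map_one]
    · intro x
      induction x using QuotientGroup.induction_on with | H v => ?_
      intro hv
      have hvU : v⁻¹ * f v ∈ U := QuotientGroup.eq.mp hv.symm
      rw [quotientHom_apply_mk,
        apply_eq_self_of_inv_mul_apply_mem_center hV hm hfg hg hfix hvU.1 hvU.2]
  ext v
  have hvU : v⁻¹ * g v ∈ U := QuotientGroup.eq.mp (DFunLike.congr_fun hg' (v : V ⧸ U)).symm
  exact apply_eq_self_of_apply_inv_mul_apply hV hm hg (hfix _ hvU.2)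

end MulAut

theorem isPGroup_centralizer_inf_fixingSubgroup_fixedBy {p : ℕ} {V X : Type*} [Group V]
    [Finite V] [Group X] [Finite X] [MulDistribMulAction X V] [FaithfulSMul X V] (hp : p.Prime)
    (hV : IsPGroup p V) {a : X} {k : ℕ} (ha : a ^ p ^ k = 1) :
    IsPGroup p (centralizer {a} ⊓ fixingSubgroup X (fixedBy V a) : Subgroup X) := by
  refine IsPGroup.of_coprime_pow_eq_one_imp_eq_one hp ?_
  rintro ⟨y, hya, hyfix⟩ m hm hy
  let τ := MulDistribMulAction.toMulAut X V
  have hτy : τ y = 1 := MulAut.eq_one_of_commute_of_fixed_imp_fixed hp hV hm (f := τ a)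
    ((show Commute a y from (mem_centralizer_singleton_iff.mp hya).symm).map τ)
    (by rw [← map_pow, ha, map_one])
    (by rw [← map_pow, show y ^ m = 1 from congrArg Subtype.val hy, map_one])
    fun v hv => hyfix ⟨v, hv⟩
  exact Subtype.ext <| eq_of_smul_eq_smul fun v =>
    (DFunLike.congr_fun hτy v).trans (one_smul X v).symm

theorem stmt6_general {p : ℕ} (hp : p.Prime) {V X : Type*} [Group V] [Finite V] [Group X] [Finite X]
    [MulDistribMulAction X V]
    (hfaithful : ∀ x : X, (∀ v : V, x • v = v) → x = 1)
    (hVp : IsPGroup p V)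
    (A : Subgroup X)
    (hAexp : ∀ a ∈ A, a ^ p = 1) (hAab : ∀ a ∈ A, ∀ b ∈ A, a * b = b * a)
    (hAfix : ∀ a ∈ A, a ≠ 1 →
      {v : V | a • v = v} = {v : V | ∀ b ∈ A, b • v = v})
    (L : Subgroup X) (hLnt : L ≠ ⊥) (hLA : L = ⁅L, A⁆) :
    ∀ a ∈ A, (∀ l ∈ L, a * l = l * a) → a = 1 := by
  intro a ha hLa
  by_contra ha1
  have : Fact p.Prime := ⟨hp⟩
  have : FaithfulSMul X V := faithfulSMul_iff.mpr hfaithful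
  have hAcent : A ≤ centralizer {a} := fun b hb =>
    mem_centralizer_singleton_iff.mpr (hAab b hb a ha)
  have hLcent : L ≤ centralizer {a} := fun l hl =>
    mem_centralizer_singleton_iff.mpr (hLa l hl).symm
  have hAfixing : A ≤ fixingSubgroup X (fixedBy V a) := fun b hb v =>
    (hAfix a ha ha1).subset v.2 b hb
  have hLfixing : L ≤ fixingSubgroup X (fixedBy V a) := hLA.le.trans <|
    (commutator_mono (hLcent.trans (centralizer_le_stabilizer_fixedBy a)) hAfixing).trans
      (commutator_stabilizer_fixingSubgroup_le _)
  have : Group.IsNilpotent (centralizer {a} ⊓ fixingSubgroup X (fixedBy V a) : Subgroup X) :=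
    (isPGroup_centralizer_inf_fixingSubgroup_fixedBy hp hVp (k := 1)
      ((pow_one p).symm ▸ hAexp a ha)).isNilpotent
  exact hLnt <| eq_bot_of_le_commutator (le_inf hLcent hLfixing) <|
    hLA.le.trans (commutator_mono le_rfl (le_inf hAcent hAfixing))

/-- Let `V` be a finite `p`-group and `X` a finite group acting faithfully on
`V` (by automorphisms) with `O_p(X) = 1`.  Let `A ≤ X` be elementary abelian of order at
least `p²` with `C_V(A) = C_V(a)` for all nonidentity `a ∈ A`.  If `L` is a nontrivial
subgroup of `X` with `L = [L,A]`, then `A` acts faithfully on `L`: no nonidentity element of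
`A` centralizes `L`. -/
theorem stmt6 {p : ℕ} (hp : p.Prime) {V X : Type*} [Group V] [Finite V] [Group X] [Finite X]
    [MulDistribMulAction X V]
    (hfaithful : ∀ x : X, (∀ v : V, x • v = v) → x = 1)
    (hVp : IsPGroup p V)
    (hOp : ∀ N : Subgroup X, N.Normal → IsPGroup p N → N = ⊥)
    (A : Subgroup X)
    (hAexp : ∀ a ∈ A, a ^ p = 1) (hAab : ∀ a ∈ A, ∀ b ∈ A, a * b = b * a)
    (hAcard : p ^ 2 ≤ Nat.card A)
    (hAfix : ∀ a ∈ A, a ≠ 1 →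
      {v : V | a • v = v} = {v : V | ∀ b ∈ A, b • v = v})
    (L : Subgroup X) (hLnt : L ≠ ⊥) (hLA : L = ⁅L, A⁆) :
    ∀ a ∈ A, (∀ l ∈ L, a * l = l * a) → a = 1 :=
  stmt6_general hp hfaithful hVp A hAexp hAab hAfix L hLnt hLA
end

section
/- Let p be a prime, V a finite p-group, and X a finite group acting faithfully on V such that every normal p-subgroup of X is trivial (O_p(X) = 1). Let A ≤ X be an elementary abelian p-subgroup of order at least p² with the property that C_V(A) = C_V(a) for every nonidentity a ∈ A. Then A centralizes every subgroup F of X of order prime to p which A normalizes: [F,A] = 1. -/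
/-!
Thompson's `P × Q`-lemma, for a single `p`-automorphism `α` and a single `p'`-automorphism `γ`
of a `p`-group commuting with each other, says that `C_V(α) ≤ C_V(γ)` forces `γ` to act
trivially. For `x ∈ F` centralized by some `1 ≠ a ∈ A` and `b ∈ A`, the element `c = x⁻¹ x^b`
of `F` is a `p'`-element commuting with `a` which fixes `C_V(a) = C_V(A)` pointwise, hence
`c = 1` by faithfulness. So `C_F(a) ≤ C_F(A)` for every `a ≠ 1`.

It remains to see that a noncyclic elementary abelian `p`-group `A` acting on a `p'`-group `F`
with this property acts trivially. A minimal counterexample is generated by `A`-invariant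
Sylow subgroups, hence is a `q`-group, so `[F, F] < F` is centralized and `F / C_F(A)` is
abelian. There every `a ≠ 1` acts fixed-point-freely, since an `a`-invariant coset of `C_F(A)`
contains an `a`-fixed element by counting. Multiplying the norms of `ξ` over the `p + 1`
cyclic subgroups of `⟨a, b⟩ ≅ C_p × C_p` gives `ξ ^ p = 1`, so `ξ = 1`.
-/

open Subgroup
open scoped Pointwise

namespace MulDistribMulAction

variable {Γ G : Type*} [Group Γ] [Group G] [MulDistribMulAction Γ G]

abbrev onSubgroup (H : Subgroup G) (hH : ∀ g : Γ, ∀ x ∈ H, g • x ∈ H) :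
    MulDistribMulAction Γ H where
  smul g x := ⟨g • (x : G), hH g x x.2⟩
  one_smul x := Subtype.ext (one_smul Γ (x : G))
  mul_smul g h x := Subtype.ext (mul_smul g h (x : G))
  smul_one g := Subtype.ext (smul_one g)
  smul_mul g x y := Subtype.ext (smul_mul' g (x : G) y)

abbrev onQuotient (N : Subgroup G) [N.Normal] (hN : ∀ g : Γ, ∀ x ∈ N, g • x ∈ N) :
    MulDistribMulAction Γ (G ⧸ N) where
  smul g := QuotientGroup.map N N (toMonoidHom G g) (fun x hx => hN g x hx)
  one_smul ξ := QuotientGroup.induction_on ξ fun x => congrArg _ (one_smul Γ x)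
  mul_smul g h ξ := QuotientGroup.induction_on ξ fun x => congrArg _ (mul_smul g h x)
  smul_one _ := map_one _
  smul_mul _ := map_mul _

theorem smul_mem_iff_of_characteristic (H : Subgroup G) [H.Characteristic] (g : Γ) (x : G) :
    g • x ∈ H ↔ x ∈ H := by
  conv_rhs => rw [← (‹H.Characteristic›.fixed (toMulAut Γ G g))]
  rfl

end MulDistribMulAction

theorem Subgroup.card_lt_card_of_ne_top {G : Type*} [Group G] [Finite G] {H : Subgroup G}
    (hH : H ≠ ⊤) : Nat.card H < Nat.card G :=
  (card_le_card_group H).lt_of_ne fun h => hH ((card_eq_iff_eq_top H).mp h)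

theorem Subgroup.eq_top_of_forall_sylow_le {G : Type*} [Group G] [Finite G] {H : Subgroup G}
    (h : ∀ q, q.Prime → ∃ S : Sylow q G, (S : Subgroup G) ≤ H) : H = ⊤ := by
  rw [← index_eq_one, Nat.eq_one_iff_not_exists_prime_dvd]
  intro q hq hdvd
  have := Fact.mk hq
  obtain ⟨S, hS⟩ := h q hq
  exact S.not_dvd_index (hdvd.trans (index_dvd_of_le hS))

theorem IsPGroup.card_quotient_center_lt {p : ℕ} [Fact p.Prime] {G : Type*} [Group G]
    [Finite G] [Nontrivial G] (hG : IsPGroup p G) : Nat.card (G ⧸ center G) < Nat.card G := by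
  rw [card_eq_card_quotient_mul_card_subgroup (center G)]
  exact lt_mul_of_one_lt_right Nat.card_pos
    (Finite.one_lt_card_iff_nontrivial.mpr hG.center_nontrivial)

theorem IsPGroup.eq_one_of_pow_eq_one {p : ℕ} {G : Type*} [Group G] (hG : IsPGroup p G)
    {m : ℕ} (hm : m.Coprime p) {x : G} (hx : x ^ m = 1) : x = 1 :=
  (hG.powEquiv hm.symm).injective (by simp [hx])

theorem ZMod.prod_val_eq_prod_range {p : ℕ} [NeZero p] {M : Type*} [CommMonoid M]
    (f : ℕ → M) : ∏ c : ZMod p, f c.val = ∏ c ∈ Finset.range p, f c := by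
  obtain ⟨n, rfl⟩ := Nat.exists_eq_succ_of_ne_zero (NeZero.ne p)
  exact Fin.prod_univ_eq_prod_range f (n + 1)

theorem exists_ne_one_notMem_zpowers {p : ℕ} (hp : 1 < p) {P : Type*} [Group P]
    (hPexp : ∀ a : P, a ^ p = 1) (hPcard : p ^ 2 ≤ Nat.card P) :
    ∃ a b : P, a ≠ 1 ∧ b ∉ zpowers a := by
  have hcard : p < Nat.card P := lt_of_lt_of_le (by nlinarith) hPcard
  have : Finite P := Nat.finite_of_card_ne_zero (by omega)
  have : Nontrivial P := Finite.one_lt_card_iff_nontrivial.mp (by omega)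
  obtain ⟨a, ha⟩ := exists_ne (1 : P)
  have hle : Nat.card (zpowers a) ≤ p :=
    Nat.card_zpowers a ▸ orderOf_le_of_pow_eq_one (by omega) (hPexp a)
  have htop : zpowers a ≠ ⊤ := fun h => by
    rw [h, card_top] at hle
    omega
  obtain ⟨b, -, hb⟩ := SetLike.exists_of_lt (lt_top_iff_ne_top.mpr htop)
  exact ⟨a, b, ha, hb⟩

section CyclicNorm

variable {Γ M : Type*} [Group Γ] [CommGroup M] [MulDistribMulAction Γ M]

def cyclicNorm (m : ℕ) (g : Γ) : M →* M :=
  ∏ k ∈ Finset.range m, MulDistribMulAction.toMonoidHom M (g ^ k)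

theorem cyclicNorm_apply (m : ℕ) (g : Γ) (x : M) :
    cyclicNorm m g x = ∏ k ∈ Finset.range m, g ^ k • x := by
  simp [cyclicNorm]

theorem smul_cyclicNorm_of_commute {m : ℕ} {g h : Γ} (hgh : Commute h g) (x : M) :
    h • cyclicNorm m g x = cyclicNorm m g (h • x) := by
  simp only [cyclicNorm_apply, Finset.smul_prod', smul_smul, ((hgh.pow_right _).eq)]

theorem smul_cyclicNorm {m : ℕ} {g : Γ} (hg : g ^ m = 1) (x : M) :
    g • cyclicNorm m g x = cyclicNorm m g x := by
  have h := Finset.prod_range_succ' (fun k => g ^ k • x) m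
  rw [Finset.prod_range_succ, hg, pow_zero] at h
  simp only [cyclicNorm_apply, Finset.smul_prod', smul_smul, ← pow_succ']
  exact mul_right_cancel h.symm

theorem cyclicNorm_of_smul_eq_self {m : ℕ} {g : Γ} {x : M} (hx : g • x = x) :
    cyclicNorm m g x = x ^ m := by
  have hxk (k : ℕ) : g ^ k • x = x := (MulAction.stabilizer Γ x).pow_mem hx k
  simp [cyclicNorm_apply, hxk]

end CyclicNorm

section PrimePowerOrder

variable {p : ℕ} [Fact p.Prime] {Γ : Type*} [Group Γ] {k : ℕ} {g : Γ}

theorem MulAction.exists_smul_eq_self_of_not_dvd_card {α : Type*} [MulAction Γ α] [Finite α]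
    (hg : g ^ p ^ k = 1) {S : Set α} (hS : ∀ x, g • x ∈ S ↔ x ∈ S)
    (hpS : ¬ p ∣ Nat.card S) : ∃ x ∈ S, g • x = x := by
  let τ : Equiv.Perm S := (MulAction.toPerm g).subtypePerm hS
  have hτ : τ ^ p ^ k = 1 := by
    ext x
    simp [τ, ← MulAction.toPermHom_apply, ← map_pow, hg]
  have hP : IsPGroup p (zpowers τ) := IsPGroup.of_card_dvd_pow (n := k)
    (by rw [Nat.card_zpowers]; exact orderOf_dvd_of_pow_eq_one hτ)
  obtain ⟨x, hx⟩ := hP.nonempty_fixed_point_of_prime_not_dvd_card S hpS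
  exact ⟨x, x.2, congrArg Subtype.val (hx ⟨τ, mem_zpowers τ⟩)⟩

theorem exists_smul_eq_self_of_inv_mul_smul_mem {G : Type*} [Group G] [Finite G]
    [MulDistribMulAction Γ G] (hg : g ^ p ^ k = 1) {N : Subgroup G}
    (hN : ∀ h : Γ, ∀ n ∈ N, h • n ∈ N) (hpN : ¬ p ∣ Nat.card N) {x : G}
    (hx : x⁻¹ * g • x ∈ N) : ∃ y, x⁻¹ * y ∈ N ∧ g • y = y := by
  have hgN (n : G) : g • n ∈ N ↔ n ∈ N := ⟨fun h => by simpa using hN g⁻¹ _ h, hN g n⟩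
  have hS (y : G) : g • y ∈ x • (N : Set G) ↔ y ∈ x • (N : Set G) := by
    rw [mem_leftCoset_iff, mem_leftCoset_iff,
      show x⁻¹ * g • y = (x⁻¹ * g • x) * g • (x⁻¹ * y) by rw [smul_mul', smul_inv']; group,
      SetLike.mem_coe, SetLike.mem_coe, N.mul_mem_cancel_left hx, hgN]
  obtain ⟨y, hy, hgy⟩ :=
    MulAction.exists_smul_eq_self_of_not_dvd_card hg hS (by rwa [Set.natCard_smul_set])
  exact ⟨y, (mem_leftCoset_iff x).mp hy, hgy⟩

theorem IsPGroup.exists_sylow_smul_eq_self (q : ℕ) [Fact q.Prime] {P G : Type*} [Group P]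
    [Group G] [Finite G] [MulDistribMulAction P G] (hP : IsPGroup p P)
    (hG : ¬ p ∣ Nat.card G) : ∃ S : Sylow q G, ∀ g : P, g • S = S := by
  obtain ⟨S⟩ : Nonempty (Sylow q G) := inferInstance
  have hpS : ¬ p ∣ Nat.card (Sylow q G) := fun h =>
    hG (h.trans (S.card_eq_index_normalizer ▸ index_dvd_card _))
  obtain ⟨S, hS⟩ := hP.nonempty_fixed_point_of_prime_not_dvd_card (Sylow q G) hpS
  exact ⟨S, hS⟩

end PrimePowerOrder

section PTimesQ

variable {p : ℕ} {Γ : Type*} [Group Γ] {k m : ℕ} {α γ : Γ}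

theorem eq_one_of_smul_eq_mul_of_smul_eq_self {V : Type*} [Group V] [MulDistribMulAction Γ V]
    (hV : IsPGroup p V) (hγ : γ ^ m = 1) (hm : m.Coprime p) {v ℓ : V} (hv : γ • v = ℓ * v)
    (hℓ : γ • ℓ = ℓ) : ℓ = 1 := by
  have hpow (j : ℕ) : γ ^ j • v = ℓ ^ j * v := by
    induction j with
    | zero => simp
    | succ j ih => rw [pow_succ', mul_smul, ih, smul_mul', smul_pow', hℓ, hv, pow_succ, mul_assoc]
  exact hV.eq_one_of_pow_eq_one hm (by simpa [hγ] using (hpow m).symm)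

theorem smul_eq_self_of_inv_mul_smul_mem_center {V : Type*} [Group V]
    [MulDistribMulAction Γ V] (hV : IsPGroup p V) (hγ : γ ^ m = 1) (hm : m.Coprime p)
    (hZ : ∀ z ∈ center V, γ • z = z) (hγZ : ∀ v : V, v⁻¹ * γ • v ∈ center V) (v : V) :
    γ • v = v := by
  have hv : γ • v = (v⁻¹ * γ • v) * v := by
    rw [← mem_center_iff.mp (hγZ v) v]
    group
  exact (inv_mul_eq_one.mp
    (eq_one_of_smul_eq_mul_of_smul_eq_self hV hγ hm hv (hZ _ (hγZ v)))).symm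

theorem smul_eq_self_of_fixed_subset_of_inv_mul_smul_mem_center {V : Type*} [Group V]
    [MulDistribMulAction Γ V] (hV : IsPGroup p V) (hγ : γ ^ m = 1) (hm : m.Coprime p)
    (hαγ : Commute α γ) (hfix : ∀ v : V, α • v = v → γ • v = v)
    (hZ : ∀ z ∈ center V, γ • z = z) (hαZ : ∀ v : V, v⁻¹ * α • v ∈ center V) (v : V) :
    γ • v = v := by
  have hαv : α • v = v * (v⁻¹ * α • v) := by group
  have hℓ : α • (γ • v * v⁻¹) = γ • v * v⁻¹ := by
    rw [smul_mul', smul_inv', smul_smul, hαγ.eq, ← smul_smul, hαv, smul_mul', hZ _ (hαZ v)]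
    group
  exact mul_inv_eq_one.mp
    (eq_one_of_smul_eq_mul_of_smul_eq_self hV hγ hm (v := v) (by group) (hfix _ hℓ))

variable [Fact p.Prime]

theorem smul_eq_self_of_fixed_subset_of_commGroup {V : Type*} [CommGroup V] [Finite V]
    [MulDistribMulAction Γ V] (hV : IsPGroup p V) (hα : α ^ p ^ k = 1) (hγ : γ ^ m = 1)
    (hm : m.Coprime p) (hαγ : Commute α γ) (hfix : ∀ v : V, α • v = v → γ • v = v) (v : V) :
    γ • v = v := by
  have hker : (cyclicNorm m γ : V →* V).ker = ⊥ := by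
    by_contra hK
    set K := (cyclicNorm m γ : V →* V).ker
    have hpK : p ∣ Nat.card K :=
      ((hV.to_subgroup K).card_eq_or_dvd).resolve_left (by rwa [card_eq_one])
    have hcard : Nat.card ↥((K : Set V) \ {1}) + 1 = Nat.card K :=
      Set.ncard_sdiff_singleton_add_one K.one_mem
    have hinv (x : V) : α • x ∈ (K : Set V) \ {1} ↔ x ∈ (K : Set V) \ {1} := by
      simp only [Set.mem_sdiff, SetLike.mem_coe, MonoidHom.mem_ker, Set.mem_singleton_iff, K,
        ← smul_cyclicNorm_of_commute hαγ]
      conv_lhs => rw [← smul_one α, smul_left_cancel_iff, smul_left_cancel_iff]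
    obtain ⟨x, ⟨hxK, hx1⟩, hαx⟩ := MulAction.exists_smul_eq_self_of_not_dvd_card hα hinv
      fun h => (Fact.out : p.Prime).one_lt.ne'
        (Nat.dvd_one.mp ((Nat.dvd_add_right h).mp (hcard ▸ hpK)))
    rw [SetLike.mem_coe, MonoidHom.mem_ker, cyclicNorm_of_smul_eq_self (hfix x hαx)] at hxK
    exact hx1 (hV.eq_one_of_pow_eq_one hm hxK)
  obtain ⟨w, rfl⟩ := (Finite.injective_iff_surjective.mp
    ((MonoidHom.ker_eq_bot_iff _).mp hker)) v
  exact smul_cyclicNorm hγ w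

universe u

/-- Commutativity of `Γ` makes the preimage of `C_{V/Z(V)}(α)` a `Γ`-invariant subgroup. -/
theorem smul_eq_self_of_fixed_subset_of_isMulCommutative [IsMulCommutative Γ] {V : Type u}
    [Group V] [Finite V] [MulDistribMulAction Γ V] (hV : IsPGroup p V) (hα : α ^ p ^ k = 1)
    (hγ : γ ^ m = 1) (hm : m.Coprime p) (hfix : ∀ v : V, α • v = v → γ • v = v) (v : V) :
    γ • v = v := by
  induction hn : Nat.card V using Nat.strong_induction_on generalizing V with | _ n ih
  by_cases hcomm : ∀ x y : V, x * y = y * x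
  · let : CommGroup V := { mul_comm := hcomm }
    exact smul_eq_self_of_fixed_subset_of_commGroup hV hα hγ hm (mul_comm' α γ) hfix v
  have hsub (H : Subgroup V) (hH : H ≠ ⊤) (hinv : ∀ g : Γ, ∀ x ∈ H, g • x ∈ H) :
      ∀ x ∈ H, γ • x = x := by
    let := MulDistribMulAction.onSubgroup H hinv
    intro x hx
    exact congrArg Subtype.val (ih _ (hn ▸ card_lt_card_of_ne_top hH) (hV.to_subgroup H)
      (fun y hy => Subtype.ext (hfix y (congrArg Subtype.val hy))) ⟨x, hx⟩ rfl)
  have hZtop : center V ≠ ⊤ := fun h => hcomm fun x y => mem_center_iff.mp (h ▸ mem_top y) x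
  have hZinv (g : Γ) (z : V) (hz : z ∈ center V) : g • z ∈ center V :=
    (MulDistribMulAction.smul_mem_iff_of_characteristic _ g z).mpr hz
  have hZ : ∀ z ∈ center V, γ • z = z := hsub _ hZtop hZinv
  let := MulDistribMulAction.onQuotient (center V) hZinv
  let V₀ : Subgroup V :=
    ((MulDistribMulAction.toMonoidHom (V ⧸ center V) α).eqLocus (MonoidHom.id _)).comap
      (QuotientGroup.mk' _)
  have hV₀ (x : V) : x ∈ V₀ ↔ x⁻¹ * α • x ∈ center V := eq_comm.trans QuotientGroup.eq
  by_cases hV₀top : V₀ = ⊤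
  · exact smul_eq_self_of_fixed_subset_of_inv_mul_smul_mem_center hV hγ hm (mul_comm' α γ)
      hfix hZ (fun x => (hV₀ x).mp (hV₀top ▸ mem_top x)) v
  have hV₀inv (g : Γ) (x : V) (hx : x ∈ V₀) : g • x ∈ V₀ := by
    rw [hV₀] at hx ⊢
    rw [smul_smul, mul_comm' α g, ← smul_smul, ← smul_inv', ← smul_mul']
    exact hZinv g _ hx
  have hV₀fix := hsub V₀ hV₀top hV₀inv
  have := (subsingleton_or_nontrivial V).resolve_left fun _ =>
    hcomm fun _ _ => Subsingleton.elim _ _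
  have hquot (ξ : V ⧸ center V) : γ • ξ = ξ :=
    ih _ (hn ▸ hV.card_quotient_center_lt) (hV.to_quotient _) (fun ξ =>
      QuotientGroup.induction_on ξ fun x hx => congrArg QuotientGroup.mk (hV₀fix x hx)) ξ rfl
  exact smul_eq_self_of_inv_mul_smul_mem_center hV hγ hm hZ
    (fun x => QuotientGroup.eq.mp (hquot x).symm) v

theorem smul_eq_self_of_commute_of_fixed_subset {V : Type*} [Group V] [Finite V]
    [MulDistribMulAction Γ V] (hV : IsPGroup p V) (hα : α ^ p ^ k = 1) (hγ : γ ^ m = 1)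
    (hm : m.Coprime p) (hαγ : Commute α γ) (hfix : ∀ v : V, α • v = v → γ • v = v) (v : V) :
    γ • v = v := by
  have hcomm : ∀ x ∈ ({α, γ} : Set Γ), ∀ y ∈ ({α, γ} : Set Γ), x * y = y * x := by
    rintro x (rfl | rfl) y (rfl | rfl)
    exacts [rfl, hαγ.eq, hαγ.symm.eq, rfl]
  have := isMulCommutative_closure hcomm
  exact smul_eq_self_of_fixed_subset_of_isMulCommutative
    (α := ⟨α, subset_closure (Set.mem_insert α _)⟩)
    (γ := ⟨γ, subset_closure (Set.mem_insert_of_mem α (Set.mem_singleton γ))⟩)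
    hV (Subtype.ext hα) (Subtype.ext hγ) hm hfix v

end PTimesQ

section ElementaryAbelian

variable {p : ℕ} [Fact p.Prime] {P : Type*} [Group P]

theorem mul_pow_ne_one_of_notMem_zpowers {a b : P} (ha : a ≠ 1) (hb : b ^ p = 1)
    (hb' : b ∉ zpowers a) (c : ℕ) : a * b ^ c ≠ 1 := by
  intro h
  by_cases hc : p ∣ c
  · obtain ⟨d, rfl⟩ := hc
    exact ha (by simpa [pow_mul, hb] using h)
  · obtain ⟨t, ht⟩ := exists_pow_eq_self_of_coprime (x := b) (n := c)
      ((Nat.Coprime.symm ((Fact.out : p.Prime).coprime_iff_not_dvd.mpr hc)).coprime_dvd_right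
        (orderOf_dvd_of_pow_eq_one hb))
    apply hb'
    rw [← ht, eq_inv_of_mul_eq_one_right h]
    exact pow_mem (inv_mem (mem_zpowers a)) t

theorem pow_eq_one_of_fixedPointFree {M : Type*} [CommGroup M] [MulDistribMulAction P M]
    {a b : P} (hab : Commute a b) (ha : a ^ p = 1) (hb : b ^ p = 1) (ha1 : a ≠ 1)
    (hb' : b ∉ zpowers a) (hfree : ∀ g : P, g ≠ 1 → ∀ x : M, g • x = x → x = 1) (x : M) :
    x ^ p = 1 := by
  have hN (g : P) (hg : g ^ p = 1) (hg1 : g ≠ 1) : cyclicNorm p g x = 1 :=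
    hfree g hg1 _ (smul_cyclicNorm hg x)
  have hb1 : b ≠ 1 := fun h => hb' (h ▸ one_mem _)
  -- Each `a ^ k * b ^ j ≠ 1` lies in exactly one of the subgroups `⟨a * b ^ c⟩` and `⟨b⟩`.
  have hsum : ∏ c : ZMod p, cyclicNorm p (a * b ^ c.val) x = x ^ p := calc
    _ = ∏ c : ZMod p, ∏ k : ZMod p, a ^ k.val • b ^ (c * k).val • x := by
      refine Finset.prod_congr rfl fun c _ => ?_
      rw [cyclicNorm_apply, ← ZMod.prod_val_eq_prod_range]
      refine Finset.prod_congr rfl fun k _ => ?_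
      rw [smul_smul, (hab.pow_right _).mul_pow, ← pow_mul, ZMod.val_mul, ← pow_eq_pow_mod _ hb]
    _ = ∏ k : ZMod p, a ^ k.val • ∏ c : ZMod p, b ^ (c * k).val • x := by
      rw [Finset.prod_comm]
      simp only [Finset.smul_prod']
    _ = x ^ p := by
      rw [Finset.prod_eq_single 0]
      · simp
      · intro k _ hk
        rw [Fintype.prod_equiv (Equiv.mulRight₀ k hk) (fun c => b ^ (c * k).val • x)
            (fun c => b ^ c.val • x) fun _ => rfl,
          ZMod.prod_val_eq_prod_range (fun c => b ^ c • x), ← cyclicNorm_apply, hN b hb hb1,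
          smul_one]
      · simp
  rw [← hsum]
  refine Finset.prod_eq_one fun c _ => hN _ ?_ (mul_pow_ne_one_of_notMem_zpowers ha1 hb hb' _)
  rw [(hab.pow_right _).mul_pow, ha, ← pow_mul, mul_comm, pow_mul, hb, one_pow, one_mul]

theorem mem_fixedPoints_of_inv_mul_smul_mem {G : Type*} [Group G] [Finite G]
    [MulDistribMulAction P G] (hG : ¬ p ∣ Nat.card G) {k : ℕ} {a : P} (ha : a ^ p ^ k = 1)
    (hfix : ∀ x : G, a • x = x → x ∈ FixedPoints.subgroup P G) {x : G}
    (hx : x⁻¹ * a • x ∈ FixedPoints.subgroup P G) : x ∈ FixedPoints.subgroup P G := by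
  have hinv (g : P) (n : G) (hn : n ∈ FixedPoints.subgroup P G) :
      g • n ∈ FixedPoints.subgroup P G := by
    rwa [(FixedPoints.mem_subgroup P G n).mp hn g]
  obtain ⟨y, hy, hay⟩ := exists_smul_eq_self_of_inv_mul_smul_mem ha hinv
    (fun h => hG (h.trans (card_subgroup_dvd_card _))) hx
  simpa using mul_mem (hfix y hay) (inv_mem hy)

variable [IsMulCommutative P]

theorem fixedPoints_eq_top_of_isPGroup {q : ℕ} [Fact q.Prime] {G : Type*} [Group G] [Finite G]
    [MulDistribMulAction P G] (hPexp : ∀ a : P, a ^ p = 1) (hPcard : p ^ 2 ≤ Nat.card P)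
    (hGq : IsPGroup q G) (hG : ¬ p ∣ Nat.card G)
    (hfix : ∀ a : P, a ≠ 1 → ∀ x : G, a • x = x → x ∈ FixedPoints.subgroup P G)
    (hsub : ∀ H : Subgroup G, H ≠ ⊤ → (∀ g : P, ∀ x ∈ H, g • x ∈ H) →
      H ≤ FixedPoints.subgroup P G) :
    FixedPoints.subgroup P G = ⊤ := by
  set C := FixedPoints.subgroup P G
  rcases subsingleton_or_nontrivial G with hG1 | hG1
  · exact Subsingleton.elim _ _
  have := hGq.isNilpotent
  have hDC : commutator G ≤ C := hsub _ (Group.IsSolvable.commutator_lt_top_of_nontrivial G).ne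
    fun g x => (MulDistribMulAction.smul_mem_iff_of_characteristic _ g x).mpr
  have : C.Normal := Normal.of_commutator_le G hDC
  have hCinv (g : P) (n : G) (hn : n ∈ C) : g • n ∈ C := by
    rwa [(FixedPoints.mem_subgroup P G n).mp hn g]
  let := MulDistribMulAction.onQuotient C hCinv
  have hcomm := Normal.quotient_commutative_iff_commutator_le.mpr hDC
  let : CommGroup (G ⧸ C) := { mul_comm := mul_comm' }
  have hfree (a : P) (ha : a ≠ 1) (ξ : G ⧸ C) (hξ : a • ξ = ξ) : ξ = 1 := by
    induction ξ using QuotientGroup.induction_on with | H x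
    refine (QuotientGroup.eq_one_iff x).mpr (mem_fixedPoints_of_inv_mul_smul_mem hG
      (k := 1) (by rw [pow_one, hPexp]) (hfix a ha) (QuotientGroup.eq.mp hξ.symm))
  obtain ⟨a, b, ha, hb⟩ := exists_ne_one_notMem_zpowers (Fact.out : p.Prime).one_lt hPexp hPcard
  have hp : (Nat.card (G ⧸ C)).Coprime p := ((Fact.out : p.Prime).coprime_iff_not_dvd.mpr
    fun h => hG (h.trans (card_quotient_dvd_card C))).symm
  refine eq_top_iff.mpr fun x _ => (QuotientGroup.eq_one_iff x).mp ((powCoprime hp).injective ?_)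
  show (x : G ⧸ C) ^ p = 1 ^ p
  rw [one_pow]
  exact pow_eq_one_of_fixedPointFree (mul_comm' a b) (hPexp a) (hPexp b) ha hb hfree _

universe u

theorem fixedPoints_eq_top_of_fixed_subset {G : Type u} [Group G] [Finite G]
    [MulDistribMulAction P G] (hPexp : ∀ a : P, a ^ p = 1) (hPcard : p ^ 2 ≤ Nat.card P)
    (hG : ¬ p ∣ Nat.card G)
    (hfix : ∀ a : P, a ≠ 1 → ∀ x : G, a • x = x → x ∈ FixedPoints.subgroup P G) :
    FixedPoints.subgroup P G = ⊤ := by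
  induction hn : Nat.card G using Nat.strong_induction_on generalizing G with | _ n ih
  have hsub (H : Subgroup G) (hH : H ≠ ⊤) (hinv : ∀ g : P, ∀ x ∈ H, g • x ∈ H) :
      H ≤ FixedPoints.subgroup P G := by
    let := MulDistribMulAction.onSubgroup H hinv
    have hH := ih _ (hn ▸ card_lt_card_of_ne_top hH)
      (fun h => hG (h.trans (card_subgroup_dvd_card H)))
      (fun a ha x hx b => Subtype.ext (hfix a ha x (congrArg Subtype.val hx) b)) rfl
    exact fun x hx b => congrArg Subtype.val ((eq_top_iff.mp hH) (mem_top ⟨x, hx⟩) b)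
  by_cases hGq : ∃ q, q.Prime ∧ IsPGroup q G
  · obtain ⟨q, hq, hGq⟩ := hGq
    have := Fact.mk hq
    exact fixedPoints_eq_top_of_isPGroup hPexp hPcard hGq hG hfix hsub
  have hPp : IsPGroup p P := fun a => ⟨1, by rw [pow_one, hPexp]⟩
  refine eq_top_of_forall_sylow_le fun q hq => ?_
  have := Fact.mk hq
  obtain ⟨S, hS⟩ := hPp.exists_sylow_smul_eq_self q hG
  refine ⟨S, hsub S (fun h => hGq ⟨q, hq, ?_⟩) fun g x hx => ?_⟩
  · exact S.isPGroup'.of_equiv ((MulEquiv.subgroupCongr h).trans topEquiv)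
  · rw [← hS g, Sylow.pointwise_smul_def]
    exact smul_mem_pointwise_smul x g _ hx

end ElementaryAbelian

theorem commute_of_commute_of_fixed_subset {p : ℕ} [Fact p.Prime] {X V : Type*} [Group X]
    [Group V] [Finite V] [MulDistribMulAction X V]
    (hfaithful : ∀ x : X, (∀ v : V, x • v = v) → x = 1) (hVp : IsPGroup p V) {F : Subgroup X}
    (hFcop : (Nat.card F).Coprime p) {k : ℕ} {a b x : X} (ha : a ^ p ^ k = 1)
    (hab : Commute a b) (hb : b ∈ normalizer (F : Set X)) (hx : x ∈ F) (hax : Commute a x)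
    (hCa : ∀ v : V, a • v = v → b • v = v) : Commute b x := by
  set c := x⁻¹ * (b⁻¹ * x * b)
  have hcF : c ∈ F := mul_mem (inv_mem hx) (by
    simpa using (mem_normalizer_iff.mp (inv_mem hb) x).mp hx)
  have hc : c ^ Nat.card F = 1 := by
    have h := congrArg Subtype.val (pow_card_eq_one' (x := (⟨c, hcF⟩ : F)))
    rwa [coe_pow] at h
  have hac : Commute a c :=
    hax.inv_right.mul_right ((hab.inv_right.mul_right hax).mul_right hab)
  have hcfix (v : V) (hv : a • v = v) : c • v = v := by
    have hxv : a • x • v = x • v := by rw [smul_smul, hax.eq, mul_smul, hv]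
    have hbxv : b⁻¹ • x • v = x • v := by
      conv_lhs => rw [← hCa _ hxv]
      rw [inv_smul_smul]
    simp only [c, mul_smul, hCa v hv, hbxv, inv_smul_smul]
  have hc1 : x = b⁻¹ * x * b := inv_mul_eq_one.mp
    (hfaithful c (smul_eq_self_of_commute_of_fixed_subset hVp ha hc hFcop hac hcfix))
  calc b * x = b * (b⁻¹ * x * b) := by rw [← hc1]
    _ = x * b := by group

theorem stmt7_general {p : ℕ} (hp : p.Prime) {V X : Type*} [Group V] [Finite V] [Group X] [Finite X]
    [MulDistribMulAction X V]
    (hfaithful : ∀ x : X, (∀ v : V, x • v = v) → x = 1)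
    (hVp : IsPGroup p V)
    (A : Subgroup X)
    (hAexp : ∀ a ∈ A, a ^ p = 1) (hAab : ∀ a ∈ A, ∀ b ∈ A, a * b = b * a)
    (hAcard : p ^ 2 ≤ Nat.card A)
    (hAfix : ∀ a ∈ A, a ≠ 1 →
      {v : V | a • v = v} = {v : V | ∀ b ∈ A, b • v = v}) :
    ∀ F : Subgroup X, Nat.Coprime (Nat.card F) p → A ≤ Subgroup.normalizer (F : Set X) → ⁅F, A⁆ = ⊥ := by
  intro F hFcop hFn
  have := Fact.mk hp
  have : IsMulCommutative A := ⟨⟨fun a b => Subtype.ext (hAab a a.2 b b.2)⟩⟩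
  let : MulDistribMulAction A F := MulDistribMulAction.compHom F (inclusion hFn)
  have hsmul (a : A) (x : F) : a • x = x ↔ Commute (a : X) x :=
    Subtype.ext_iff.trans mul_inv_eq_iff_eq_mul
  have hfix (a : A) (ha : a ≠ 1) (x : F) (hax : a • x = x) (b : A) : b • x = x :=
    (hsmul b x).mpr (commute_of_commute_of_fixed_subset hfaithful hVp hFcop (k := 1)
      (by rw [pow_one]; exact hAexp a a.2) (hAab a a.2 b b.2) (hFn b.2) x.2 ((hsmul a x).mp hax)
      fun v hv => (Set.ext_iff.mp (hAfix a a.2 (by simpa using ha)) v).mp hv b b.2)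
  have hC := fixedPoints_eq_top_of_fixed_subset (fun a => Subtype.ext (hAexp a a.2)) hAcard
    (hp.coprime_iff_not_dvd.mp hFcop.symm) hfix
  rw [commutator_eq_bot_iff_le_centralizer]
  exact fun x hx => mem_centralizer_iff.mpr fun b hb =>
    ((hsmul ⟨b, hb⟩ ⟨x, hx⟩).mp ((eq_top_iff.mp hC) (mem_top ⟨x, hx⟩) ⟨b, hb⟩)).eq

/-- Let `V` be a finite `p`-group and `X` a finite group acting faithfully on
`V` (by automorphisms) with `O_p(X) = 1`.  Let `A ≤ X` be elementary abelian of order at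
least `p²` with `C_V(A) = C_V(a)` for all nonidentity `a ∈ A`.  Then `A` centralizes every
subgroup `F` of `X` of order prime to `p` which `A` normalizes: `[F,A] = 1`. -/
theorem stmt7 {p : ℕ} (hp : p.Prime) {V X : Type*} [Group V] [Finite V] [Group X] [Finite X]
    [MulDistribMulAction X V]
    (hfaithful : ∀ x : X, (∀ v : V, x • v = v) → x = 1)
    (hVp : IsPGroup p V)
    (hOp : ∀ N : Subgroup X, N.Normal → IsPGroup p N → N = ⊥)
    (A : Subgroup X)
    (hAexp : ∀ a ∈ A, a ^ p = 1) (hAab : ∀ a ∈ A, ∀ b ∈ A, a * b = b * a)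
    (hAcard : p ^ 2 ≤ Nat.card A)
    (hAfix : ∀ a ∈ A, a ≠ 1 →
      {v : V | a • v = v} = {v : V | ∀ b ∈ A, b • v = v}) :
    ∀ F : Subgroup X, Nat.Coprime (Nat.card F) p → A ≤ Subgroup.normalizer (F : Set X) → ⁅F, A⁆ = ⊥ :=
  stmt7_general hp hfaithful hVp A hAexp hAab hAcard hAfix
end

section
/- Let p be a prime, L a finite group, S a Sylow p-subgroup of L, and P = O_p(L) the largest normal p-subgroup of L. Let W be a subgroup of S which is normalized by S, let m ∈ L, and set K = ⟨W, W^m⟩. Assume O^p(L)P ≤ KP. Then O^p(L) ≤ K and [O^p(L), P] ≤ [W,P][W^m,P] ≤ (W ∩ P)(W^m ∩ P) = ⟨(W ∩ P)^L⟩, the normal closure of W ∩ P in L. -/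
open Pointwise

/-- `conjClosure A H = ⟨A^H⟩`, the subgroup generated by all `H`-conjugates of `A`. -/
def conjClosure {G : Type*} [Group G] (A H : Subgroup G) : Subgroup G :=
  Subgroup.closure {x : G | ∃ h ∈ H, ∃ a ∈ A, x = h * a * h⁻¹}

/-!
Since `P = O_p(L) ≤ S`, the `p`-group `P` normalizes `W` and `W^m`, hence `[W,P] ≤ W ∩ P`,
`[W^m,P] ≤ W^m ∩ P`, and `P` normalizes `K = ⟨W, W^m⟩`. Then `KP/K` is a `p`-group, so every
`p'`-element of `KP` lies in `K`; as every `p'`-element of `L` lies in `O^p(L) ≤ KP` and these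
elements generate `O^p(L)`, we get `O^p(L) ≤ K`. For `P` normal, `[H₁H₂, P] = [H₁,P][H₂,P]`,
which gives the commutator inclusions. Finally `L = O^p(L) S`: the group `S` normalizes `W ∩ P`,
and `O^p(L)` normalizes `(W ∩ P)(W^m ∩ P) ≤ P` because it contains `[O^p(L), P]`. So every
conjugate of `W ∩ P` lies in `(W ∩ P)(W^m ∩ P)`, which is therefore the normal closure.
-/

namespace Subgroup

variable {G : Type*} [Group G]

theorem commutator_le_inf_of_le_normalizer {H N : Subgroup G} [N.Normal]
    (h : N ≤ normalizer (H : Set G)) : ⁅H, N⁆ ≤ H ⊓ N :=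
  le_inf (le_normalizer_iff_commutator_le_left.mp h) (commutator_le_right H N)

theorem le_normalizer_map_conj {H N : Subgroup G} [N.Normal] (h : N ≤ normalizer (H : Set G))
    (g : G) : N ≤ normalizer ((H.map (MulAut.conj g).toMonoidHom : Subgroup G) : Set G) :=
  calc N = N.map (MulAut.conj g).toMonoidHom := (Normal.map_conj_eq N g).symm
    _ ≤ (normalizer (H : Set G)).map (MulAut.conj g).toMonoidHom := map_mono h
    _ ≤ _ := le_normalizer_map _

theorem commutator_sup_left_le {H₁ H₂ N : Subgroup G} [N.Normal] :
    ⁅H₁ ⊔ H₂, N⁆ ≤ ⁅H₁, N⁆ ⊔ ⁅H₂, N⁆ := by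
  set D := ⁅H₁, N⁆ ⊔ ⁅H₂, N⁆
  have hDN : D ≤ N := sup_le (commutator_le_right _ _) (commutator_le_right _ _)
  -- `Hᵢ` normalizes `D` because `⁅Hᵢ, D⁆ ≤ ⁅Hᵢ, N⁆ ≤ D`.
  have hnorm : H₁ ⊔ H₂ ≤ normalizer (D : Set G) := sup_le
    (le_normalizer_iff_commutator_le_right.mpr ((commutator_mono le_rfl hDN).trans le_sup_left))
    (le_normalizer_iff_commutator_le_right.mpr ((commutator_mono le_rfl hDN).trans le_sup_right))
  rw [sup_eq_closure] at hnorm ⊢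
  refine commutator_le.mpr fun k hk n hn => ?_
  induction hk using closure_induction with
  | mem x hx =>
    rcases hx with hx | hx
    · exact mem_sup_left (commutator_mem_commutator hx hn)
    · exact mem_sup_right (commutator_mem_commutator hx hn)
  | one => simpa only [commutatorElement_one_left] using one_mem D
  | mul x y hx _ ihx ihy =>
    rw [commutatorElement_mul_left_eq_conj_mul]
    exact mul_mem ((hnorm hx _).mp ihy) ihx
  | inv x hx ih =>
    rw [commutatorElement_inv_left, ← commutatorElement_inv]
    exact (mem_normalizer_iff''.mp (hnorm hx) _).mp (inv_mem ih)

theorem mem_of_pow_prime_pow_mem {p : ℕ} (hp : p.Prime) {H : Subgroup G} {x : G} {n : ℕ}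
    (hx : ¬ p ∣ orderOf x) (h : x ^ p ^ n ∈ H) : x ∈ H := by
  obtain ⟨k, hk⟩ := exists_pow_eq_self_of_coprime ((hp.coprime_iff_not_dvd.mpr hx).pow_left n)
  exact hk ▸ pow_mem h k

theorem mem_of_mem_sup_of_isPGroup {p : ℕ} (hp : p.Prime) {K P : Subgroup G}
    (hP : IsPGroup p P) (hPK : P ≤ normalizer (K : Set G)) {x : G} (hx : ¬ p ∣ orderOf x)
    (hxKP : x ∈ K ⊔ P) : x ∈ K := by
  rw [← SetLike.mem_coe, coe_mul_of_right_le_normalizer_left K P hPK] at hxKP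
  obtain ⟨k, hk, y, hy, rfl⟩ := hxKP
  have hpow : ∀ j : ℕ, (k * y) ^ j * (y ^ j)⁻¹ ∈ K := by
    intro j
    induction j with
    | zero => simp
    | succ j ih =>
      rw [show (k * y) ^ (j + 1) * (y ^ (j + 1))⁻¹
          = (k * y) ^ j * (y ^ j)⁻¹ * (y ^ j * k * (y ^ j)⁻¹) by rw [pow_succ, pow_succ]; group]
      exact mul_mem ih ((hPK (pow_mem hy j) k).mp hk)
  obtain ⟨n, hn⟩ := hP ⟨y, hy⟩
  have hyn : y ^ p ^ n = 1 := by simpa using congrArg Subtype.val hn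
  beta_reduce at hx
  have hkyn := hpow (p ^ n)
  rw [hyn, inv_one, mul_one] at hkyn
  exact mem_of_pow_prime_pow_mem hp hx hkyn

theorem closure_setOf_not_dvd_orderOf_normal (p : ℕ) :
    (closure {x : G | ¬ p ∣ orderOf x}).Normal := by
  rw [← normalizer_eq_top_iff, eq_top_iff, le_normalizer_closure_iff]
  intro g _ x hx
  apply subset_closure
  simpa only [Set.mem_ofPred_eq, ← MulAut.conj_apply, MulEquiv.orderOf_eq] using hx

theorem le_closure_setOf_not_dvd_orderOf [Finite G] {p : ℕ} (hp : p.Prime) {T : Subgroup G}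
    (hTmin : ∀ N : Subgroup G, N.Normal → (∀ x : G, ∃ n : ℕ, x ^ p ^ n ∈ N) → T ≤ N) :
    T ≤ closure {x : G | ¬ p ∣ orderOf x} := by
  refine hTmin _ (closure_setOf_not_dvd_orderOf_normal p) fun x => ?_
  refine ⟨(orderOf x).factorization p, subset_closure ?_⟩
  rw [Set.mem_ofPred_eq, orderOf_pow_of_dvd (pow_ne_zero _ hp.ne_zero) (Nat.ordProj_dvd _ p)]
  exact Nat.not_dvd_ordCompl hp (orderOf_pos x).ne'

theorem le_of_le_sup_of_isPGroup [Finite G] {p : ℕ} (hp : p.Prime) {T K P : Subgroup G}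
    (hTq : ∀ x : G, ∃ n : ℕ, x ^ p ^ n ∈ T)
    (hTmin : ∀ N : Subgroup G, N.Normal → (∀ x : G, ∃ n : ℕ, x ^ p ^ n ∈ N) → T ≤ N)
    (hP : IsPGroup p P) (hPK : P ≤ normalizer (K : Set G)) (hT : T ≤ K ⊔ P) : T ≤ K := by
  refine (le_closure_setOf_not_dvd_orderOf hp hTmin).trans ((closure_le K).mpr fun x hx => ?_)
  obtain ⟨n, hn⟩ := hTq x
  exact mem_of_mem_sup_of_isPGroup hp hP hPK hx (hT (mem_of_pow_prime_pow_mem hp hx hn))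

theorem sup_sylow_eq_top [Finite G] {p : ℕ} [Fact p.Prime] {T : Subgroup G} [T.Normal]
    (hTq : ∀ x : G, ∃ n : ℕ, x ^ p ^ n ∈ T) (S : Sylow p G) : T ⊔ S = ⊤ := by
  have hquot : IsPGroup p (G ⧸ T) := fun q => by
    induction q using QuotientGroup.induction_on with
    | H x =>
      obtain ⟨n, hn⟩ := hTq x
      exact ⟨n, by rwa [← QuotientGroup.mk_pow, QuotientGroup.eq_one_iff]⟩
  obtain ⟨k, hk⟩ := IsPGroup.iff_card.mp hquot
  have hdvd : (T ⊔ S).index ∣ p ^ k := hk ▸ index_dvd_of_le le_sup_left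
  have hndvd : ¬ p ∣ (T ⊔ S).index :=
    fun h => S.not_dvd_index (h.trans (index_dvd_of_le le_sup_right))
  rw [← index_eq_one]
  exact (((Nat.Prime.coprime_iff_not_dvd Fact.out).mpr hndvd).symm.pow_right k).eq_one_of_dvd hdvd

end Subgroup

open Subgroup

theorem sup_map_conj_eq_conjClosure_top {G : Type*} [Group G] {T S X : Subgroup G} [T.Normal]
    (hTS : T ⊔ S = ⊤) (hS : S ≤ normalizer (X : Set G)) (g : G)
    (hT : T ≤ normalizer ((X ⊔ X.map (MulAut.conj g).toMonoidHom : Subgroup G) : Set G)) :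
    X ⊔ X.map (MulAut.conj g).toMonoidHom = conjClosure X ⊤ := by
  apply le_antisymm
  · refine sup_le (fun a ha => subset_closure ⟨1, mem_top 1, a, ha, by group⟩) ?_
    rintro _ ⟨a, ha, rfl⟩
    exact subset_closure ⟨g, mem_top g, a, ha, rfl⟩
  · refine (closure_le _).mpr ?_
    rintro _ ⟨h, -, a, ha, rfl⟩
    obtain ⟨t, ht, s, hs, rfl⟩ : h ∈ (T : Set G) * S := by rw [← normal_mul, hTS]; trivial
    rw [show t * s * a * (t * s)⁻¹ = t * (s * a * s⁻¹) * t⁻¹ by group]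
    exact (hT ht _).mp (mem_sup_left ((hS hs a).mp ha))

theorem stmt10_general {p : ℕ} (hp : p.Prime) {L : Type*} [Group L] [Finite L]
    (S : Sylow p L)
    (P : Subgroup L) (hPnorm : P.Normal) (hPp : IsPGroup p P)
    (W : Subgroup L)
    (hWnorm : ∀ s ∈ (S : Subgroup L), ∀ w ∈ W, s * w * s⁻¹ ∈ W)
    (m : L)
    (Wm : Subgroup L) (hWm : Wm = Subgroup.map (MulAut.conj m⁻¹).toMonoidHom W)
    (T : Subgroup L) (hTnorm : T.Normal)
    (hTq : ∀ x : L, ∃ n : ℕ, x ^ p ^ n ∈ T)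
    (hTmin : ∀ N : Subgroup L, N.Normal → (∀ x : L, ∃ n : ℕ, x ^ p ^ n ∈ N) → T ≤ N)
    (hTPK : T ⊔ P ≤ (W ⊔ Wm) ⊔ P) :
    T ≤ W ⊔ Wm ∧
    ((⁅T, P⁆ : Subgroup L) : Set L) ⊆ ((⁅W, P⁆ : Subgroup L) : Set L) * ((⁅Wm, P⁆ : Subgroup L) : Set L) ∧
    (((⁅W, P⁆ : Subgroup L) : Set L) * ((⁅Wm, P⁆ : Subgroup L) : Set L)) ⊆
      ((W ⊓ P : Subgroup L) : Set L) * ((Wm ⊓ P : Subgroup L) : Set L) ∧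
    ((W ⊓ P : Subgroup L) : Set L) * ((Wm ⊓ P : Subgroup L) : Set L) =
      ((conjClosure (W ⊓ P) ⊤ : Subgroup L) : Set L) := by
  have : Fact p.Prime := ⟨hp⟩
  have hPS : P ≤ S := hPp.le_sylow_of_normal S
  have hSW : (S : Subgroup L) ≤ normalizer (W : Set L) := le_normalizer_iff.mpr hWnorm
  have hPW : P ≤ normalizer (W : Set L) := hPS.trans hSW
  have hPWm : P ≤ normalizer (Wm : Set L) := hWm ▸ le_normalizer_map_conj hPW m⁻¹
  have hWP := commutator_le_inf_of_le_normalizer hPW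
  have hWmP := commutator_le_inf_of_le_normalizer hPWm
  have hTK : T ≤ W ⊔ Wm := le_of_le_sup_of_isPGroup hp hTq hTmin hPp
    ((le_inf hPW hPWm).trans (normalizer_inf_normalizer_le_normalizer_sup W Wm))
    (le_sup_left.trans hTPK)
  have hTP : ⁅T, P⁆ ≤ ⁅W, P⁆ ⊔ ⁅Wm, P⁆ :=
    (commutator_mono hTK le_rfl).trans commutator_sup_left_le
  have hSX : (S : Subgroup L) ≤ normalizer ((W ⊓ P : Subgroup L) : Set L) :=
    (le_inf hSW le_normalizer_of_normal).trans inf_normalizer_le_normalizer_inf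
  have hXm : Wm ⊓ P = (W ⊓ P).map (MulAut.conj m⁻¹).toMonoidHom := by
    rw [map_inf _ _ _ (MulAut.conj m⁻¹).injective, ← hWm]
    exact congrArg (Wm ⊓ ·) (Normal.map_conj_eq P m⁻¹).symm
  have hTY : T ≤ normalizer ((W ⊓ P ⊔ Wm ⊓ P : Subgroup L) : Set L) :=
    le_normalizer_iff_commutator_le_right.mpr <|
      (commutator_mono le_rfl (sup_le inf_le_right inf_le_right)).trans
        (hTP.trans (sup_le_sup hWP hWmP))
  refine ⟨hTK, ?_, Set.mul_subset_mul hWP hWmP, ?_⟩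
  · rwa [← coe_mul_of_right_le_normalizer_left _ _
      ((commutator_le_right Wm P).trans (normalizer_commutator_ge_right W P))]
  · rw [← coe_mul_of_right_le_normalizer_left _ _ (inf_le_right.trans (hPS.trans hSX)), hXm,
      sup_map_conj_eq_conjClosure_top (sup_sylow_eq_top hTq S) hSX _ (hXm ▸ hTY)]

/-- Let `L` be a finite group, `S` a Sylow `p`-subgroup, `P = O_p(L)`, `W ≤ S`
a subgroup normalized by `S`, `m ∈ L`, and `K = ⟨W, W^m⟩` where `W^m = m⁻¹Wm`.  If
`O^p(L)P ≤ KP` (with `T = O^p(L)`), then `O^p(L) ≤ K` and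
`[O^p(L),P] ≤ [W,P][W^m,P] ≤ (W ∩ P)(W^m ∩ P) = ⟨(W ∩ P)^L⟩`. -/
theorem stmt10 {p : ℕ} (hp : p.Prime) {L : Type*} [Group L] [Finite L]
    (S : Sylow p L)
    (P : Subgroup L) (hPnorm : P.Normal) (hPp : IsPGroup p P)
    (hPmax : ∀ N : Subgroup L, N.Normal → IsPGroup p N → N ≤ P)
    (W : Subgroup L) (hWS : W ≤ S)
    (hWnorm : ∀ s ∈ (S : Subgroup L), ∀ w ∈ W, s * w * s⁻¹ ∈ W)
    (m : L)
    (Wm : Subgroup L) (hWm : Wm = Subgroup.map (MulAut.conj m⁻¹).toMonoidHom W)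
    (T : Subgroup L) (hTnorm : T.Normal)
    (hTq : ∀ x : L, ∃ n : ℕ, x ^ p ^ n ∈ T)
    (hTmin : ∀ N : Subgroup L, N.Normal → (∀ x : L, ∃ n : ℕ, x ^ p ^ n ∈ N) → T ≤ N)
    (hTPK : T ⊔ P ≤ (W ⊔ Wm) ⊔ P) :
    T ≤ W ⊔ Wm ∧
    ((⁅T, P⁆ : Subgroup L) : Set L) ⊆ ((⁅W, P⁆ : Subgroup L) : Set L) * ((⁅Wm, P⁆ : Subgroup L) : Set L) ∧
    (((⁅W, P⁆ : Subgroup L) : Set L) * ((⁅Wm, P⁆ : Subgroup L) : Set L)) ⊆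
      ((W ⊓ P : Subgroup L) : Set L) * ((Wm ⊓ P : Subgroup L) : Set L) ∧
    ((W ⊓ P : Subgroup L) : Set L) * ((Wm ⊓ P : Subgroup L) : Set L) =
      ((conjClosure (W ⊓ P) ⊤ : Subgroup L) : Set L) :=
  stmt10_general hp S P hPnorm hPp W hWnorm m Wm hWm T hTnorm hTq hTmin hTPK
end

section
/- Let V = {f : {1,…,5} → GF(2) : Σᵢ f(i) = 0} be the sum-zero submodule of the GF(2)-permutation module of the symmetric group Sym(5) on 5 points (the non-trivial irreducible part of the 5-point permutation module, which is the natural O₄⁻(2)-module for Sym(5)). Let F₁ = ⟨(1 2)(3 4), (1 3)(2 4)⟩, a fours subgroup contained in Alt(5), and F₂ = ⟨(1 2), (3 4)⟩, a fours subgroup not contained in Alt(5). Then F₂ acts quadratically on V, i.e. [V,F₂,F₂] = 0, while F₁ does not act quadratically on V, i.e. [V,F₁,F₁] ≠ 0. -/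
open Equiv

/-- The sum-zero submodule of the `GF(2)`-permutation module of `Sym(5)` on 5 points. -/
def sumZeroFive : AddSubgroup (Fin 5 → ZMod 2) where
  carrier := {f | ∑ i, f i = 0}
  zero_mem' := by simp
  add_mem' := by
    intro a b ha hb
    simp only [Set.mem_setOf_eq] at *
    simp [Finset.sum_add_distrib, ha, hb]
  neg_mem' := by
    intro a ha
    simp only [Set.mem_setOf_eq] at *
    simp [Finset.sum_neg_distrib, ha]

/-- `[V, A]` for a set `A` of permutations acting on `Fin 5 → ZMod 2` by
`σ • f = f ∘ σ⁻¹`: the subgroup generated by all `f - σ • f` with `f ∈ V`, `σ ∈ A`. -/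
def permComm (V : AddSubgroup (Fin 5 → ZMod 2)) (A : Subgroup (Perm (Fin 5))) :
    AddSubgroup (Fin 5 → ZMod 2) :=
  AddSubgroup.closure {g | ∃ f ∈ V, ∃ σ ∈ A, g = f - f ∘ ⇑σ⁻¹}

/-- The fours group `F₁ = ⟨(1 2)(3 4), (1 3)(2 4)⟩ ≤ Alt(5)`. -/
def foursF₁ : Subgroup (Perm (Fin 5)) :=
  Subgroup.closure {swap 0 1 * swap 2 3, swap 0 2 * swap 1 3}

/-- The fours group `F₂ = ⟨(1 2), (3 4)⟩ ≰ Alt(5)`. -/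
def foursF₂ : Subgroup (Perm (Fin 5)) :=
  Subgroup.closure {swap 0 1, swap 2 3}

/-!
In characteristic 2, on a two-point orbit `{x, σ x}` the function `f - f ∘ σ` takes the values
`f x - f (σ x)` and `f (σ x) - f x`, which coincide. Hence if every orbit of `A` has at most two
points, `[V, A]` consists of `A`-invariant functions and `[V, A, A] = 0`. This applies to
`F₂`, which preserves the blocks `{1, 2}`, `{3, 4}`, `{5}`. The group `F₁` has the regular orbit
`{1, 2, 3, 4}`, and one explicit `f ∈ V` already gives a nonzero element of `[V, F₁, F₁]`.
-/

section OrbitsAtMostTwo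

variable {α β R : Type*} [Ring R] [CharP R 2]

/-- The points `x`, `σ x`, `τ x` are never pairwise distinct: every `A`-orbit has at most two
points. -/
def OrbitsAtMostTwo (A : Subgroup (Perm α)) : Prop :=
  ∀ σ ∈ A, ∀ τ ∈ A, ∀ x, σ x = x ∨ τ x = x ∨ σ x = τ x

lemma OrbitsAtMostTwo.apply_apply_eq {A : Subgroup (Perm α)} (hA : OrbitsAtMostTwo A)
    {σ : Perm α} (hσ : σ ∈ A) {x : α} (hx : σ x ≠ x) : σ (σ x) = x := by
  rcases hA σ hσ σ⁻¹ (inv_mem hσ) (σ x) with h | h | h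
  · exact absurd (σ.injective h) hx
  · exact absurd (by simpa using h.symm) hx
  · simpa using h

lemma OrbitsAtMostTwo.sub_comp_comp {A : Subgroup (Perm α)} (hA : OrbitsAtMostTwo A)
    {σ τ : Perm α} (hσ : σ ∈ A) (hτ : τ ∈ A) (f : α → R) :
    (f - f ∘ σ) ∘ τ = f - f ∘ σ := by
  funext x
  simp only [Function.comp_apply, Pi.sub_apply]
  by_cases hτx : τ x = x
  · rw [hτx]
  have hττ : τ (τ x) = x := hA.apply_apply_eq hτ hτx
  rcases hA σ hσ τ hτ x with hσx | hτx' | hστ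
  · have : σ (τ x) = τ x := by
      rcases hA σ hσ τ hτ (τ x) with h | h | h
      · exact h
      · exact absurd (by rwa [hττ, eq_comm] at h) hτx
      · exact absurd (σ.injective (by rw [h, hττ, hσx])) hτx
    rw [this, hσx, sub_self, sub_self]
  · exact absurd hτx' hτx
  · rw [← hστ, hA.apply_apply_eq hσ (hστ ▸ hτx), CharTwo.sub_eq_add, CharTwo.sub_eq_add,
      add_comm]

def blockStabilizer (b : α → β) : Subgroup (Perm α) where
  carrier := {σ | b ∘ σ = b}
  one_mem' := rfl
  mul_mem' {σ τ} hσ hτ := by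
    change b ∘ σ ∘ τ = b
    rw [← Function.comp_assoc, hσ, hτ]
  inv_mem' {σ} hσ := by
    funext x
    simpa using (congrFun hσ (σ⁻¹ x)).symm

lemma mem_blockStabilizer {b : α → β} {σ : Perm α} :
    σ ∈ blockStabilizer b ↔ b ∘ σ = b :=
  Iff.rfl

lemma OrbitsAtMostTwo.of_le_blockStabilizer {A : Subgroup (Perm α)} {b : α → β}
    (hb : ∀ x y z, b x = b y → b x = b z → x = y ∨ x = z ∨ y = z)
    (hA : A ≤ blockStabilizer b) : OrbitsAtMostTwo A := by
  intro σ hσ τ hτ x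
  have hσb : b (σ x) = b x := congrFun (hA hσ) x
  have hτb : b (τ x) = b x := congrFun (hA hτ) x
  rcases hb x (σ x) (τ x) hσb.symm hτb.symm with h | h | h
  exacts [Or.inl h.symm, Or.inr (Or.inl h.symm), Or.inr (Or.inr h)]

end OrbitsAtMostTwo

lemma mem_permComm {V : AddSubgroup (Fin 5 → ZMod 2)} {A : Subgroup (Perm (Fin 5))}
    {f : Fin 5 → ZMod 2} {σ : Perm (Fin 5)} (hf : f ∈ V) (hσ : σ ∈ A) :
    f - f ∘ ⇑σ⁻¹ ∈ permComm V A :=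
  AddSubgroup.subset_closure ⟨f, hf, σ, hσ, rfl⟩

lemma permComm_eq_bot_iff {W : AddSubgroup (Fin 5 → ZMod 2)} {A : Subgroup (Perm (Fin 5))} :
    permComm W A = ⊥ ↔ ∀ f ∈ W, ∀ σ ∈ A, f ∘ ⇑σ⁻¹ = f := by
  rw [permComm, eq_bot_iff, AddSubgroup.closure_le]
  constructor
  · intro h f hf σ hσ
    exact (sub_eq_zero.1 (AddSubgroup.mem_bot.1 (h ⟨f, hf, σ, hσ, rfl⟩))).symm
  · rintro h _ ⟨f, hf, σ, hσ, rfl⟩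
    rw [h f hf σ hσ, sub_self]
    exact zero_mem _

lemma OrbitsAtMostTwo.comp_eq_of_mem_permComm {A : Subgroup (Perm (Fin 5))}
    (hA : OrbitsAtMostTwo A) (V : AddSubgroup (Fin 5 → ZMod 2)) {g : Fin 5 → ZMod 2}
    (hg : g ∈ permComm V A) {τ : Perm (Fin 5)} (hτ : τ ∈ A) : g ∘ ⇑τ = g := by
  induction hg using AddSubgroup.closure_induction with
  | mem _ h =>
    obtain ⟨f, -, σ, hσ, rfl⟩ := h
    exact hA.sub_comp_comp (inv_mem hσ) hτ f
  | zero => rfl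
  | add g h _ _ hg hh => rw [Pi.add_comp, hg, hh]
  | neg g _ hg => rw [Pi.neg_comp, hg]

theorem OrbitsAtMostTwo.permComm_permComm_eq_bot {A : Subgroup (Perm (Fin 5))}
    (hA : OrbitsAtMostTwo A) (V : AddSubgroup (Fin 5 → ZMod 2)) :
    permComm (permComm V A) A = ⊥ :=
  permComm_eq_bot_iff.2 fun _ hg _ hτ => hA.comp_eq_of_mem_permComm V hg (inv_mem hτ)

lemma foursF₂_le_blockStabilizer :
    foursF₂ ≤ blockStabilizer (![0, 0, 1, 1, 2] : Fin 5 → Fin 3) := by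
  rw [foursF₂, Subgroup.closure_le]
  rintro _ (rfl | rfl) <;> exact mem_blockStabilizer.2 (by decide)

lemma orbitsAtMostTwo_foursF₂ : OrbitsAtMostTwo foursF₂ :=
  .of_le_blockStabilizer (by decide) foursF₂_le_blockStabilizer

/-- On the non-trivial irreducible part `V` of the 5-point `GF(2)`-permutation
module of `Sym(5)` (the natural `O₄⁻(2)`-module), the fours group `F₂ = ⟨(1 2),(3 4)⟩` acts
quadratically, `[V,F₂,F₂] = 0`, while the fours group `F₁ = ⟨(1 2)(3 4),(1 3)(2 4)⟩ ≤ Alt(5)`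
does not, `[V,F₁,F₁] ≠ 0`. -/
theorem stmt14 :
    permComm (permComm sumZeroFive foursF₂) foursF₂ = ⊥ ∧
    permComm (permComm sumZeroFive foursF₁) foursF₁ ≠ ⊥ := by
  refine ⟨orbitsAtMostTwo_foursF₂.permComm_permComm_eq_bot sumZeroFive, fun h => ?_⟩
  set f : Fin 5 → ZMod 2 := ![1, 0, 0, 0, 1]
  set σ : Perm (Fin 5) := swap 0 1 * swap 2 3
  set τ : Perm (Fin 5) := swap 0 2 * swap 1 3
  have hf : f ∈ sumZeroFive := show ∑ i, f i = 0 by decide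
  have hσ : σ ∈ foursF₁ := Subgroup.subset_closure (Or.inl rfl)
  have hτ : τ ∈ foursF₁ := Subgroup.subset_closure (Or.inr rfl)
  have hmem := mem_permComm (mem_permComm hf hσ) hτ
  rw [h, AddSubgroup.mem_bot] at hmem
  exact absurd hmem (by decide)
end
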